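/- arXiv:2507.11835 — 5 statements merged into one kernel-verified Lean document; each statement's English description precedes it below -/
import Mathlib

section
/- Let m ≥ n ≥ 2l ≥ 1 and k ≥ 3 be integers. Let G be a graph on n vertices that contains a matching of l end-edges, and let H be the graph on n − l vertices obtained from G by deleting the l leaves of this matching of end-edges. If r(H, P_k) ≤ m − 2k + 2, then r(G, P_k) ≤ m + ⌊k/2⌋ − 1. -/
open SimpleGraph Finset

def Contains {α β : Type*} (G : SimpleGraph α) (H : SimpleGraph β) : Prop :=
  ∃ f : β ↪ α, ∀ a b : β, H.Adj a b → G.Adj (f a) (f b)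

def RamseyProp (N : ℕ) {α β : Type*} (H₁ : SimpleGraph α) (H₂ : SimpleGraph β) : Prop :=
  ∀ F : SimpleGraph (Fin N), Contains F H₁ ∨ Contains Fᶜ H₂

noncomputable def ramseyNumber {α β : Type*} (H₁ : SimpleGraph α) (H₂ : SimpleGraph β) : ℕ :=
  sInf {N : ℕ | 0 < N ∧ RamseyProp N H₁ H₂}

lemma contains_path_of_fn {V : Type*} (Q : SimpleGraph V) (k : ℕ) (c : Fin k → V)
    (hinj : Function.Injective c)
    (hadj : ∀ i : ℕ, (h : i + 1 < k) → Q.Adj (c ⟨i, Nat.lt_of_succ_lt h⟩) (c ⟨i+1, h⟩)) :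
    Contains Q (pathGraph k) := by
  refine ⟨⟨c, hinj⟩, ?_⟩
  intro a b hab
  rw [pathGraph_adj] at hab
  rcases hab with h | h
  · have hb : (a : ℕ) + 1 < k := h ▸ b.isLt
    have := hadj a hb
    have ha' : (⟨(a : ℕ), Nat.lt_of_succ_lt hb⟩ : Fin k) = a := by ext; rfl
    have hb' : (⟨(a : ℕ) + 1, hb⟩ : Fin k) = b := by ext; exact h
    rw [ha', hb'] at this
    exact this
  · have hb : (b : ℕ) + 1 < k := h ▸ a.isLt
    have := hadj b hb
    have ha' : (⟨(b : ℕ), Nat.lt_of_succ_lt hb⟩ : Fin k) = b := by ext; rfl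
    have hb' : (⟨(b : ℕ) + 1, hb⟩ : Fin k) = a := by ext; exact h
    rw [ha', hb'] at this
    exact this.symm

lemma contains_path_mono {V : Type*} {Q : SimpleGraph V} {a b : ℕ} (hab : a ≤ b)
    (h : Contains Q (pathGraph b)) : Contains Q (pathGraph a) := by
  obtain ⟨f, hf⟩ := h
  refine ⟨(Fin.castLEEmb hab).trans f, ?_⟩
  intro u v huv
  apply hf
  rw [pathGraph_adj] at huv ⊢
  simpa using huv

lemma finset_exists_fn {V : Type*} (A : Finset V) {s : ℕ} (h : A.card = s) :
    ∃ u : Fin s → V, Function.Injective u ∧ ∀ i, u i ∈ A := by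
  refine ⟨fun i => (A.equivFin.symm (Fin.cast h.symm i) : V), ?_, fun i => (A.equivFin.symm (Fin.cast h.symm i)).2⟩
  intro i j hij
  have := A.equivFin.symm.injective (Subtype.ext hij)
  simpa [Fin.ext_iff] using congrArg Fin.val (Fin.cast_injective h.symm (by exact this))

lemma contains_path_bipartite {V : Type*} [DecidableEq V] (Q : SimpleGraph V) (k : ℕ)
    (A B : Finset V) (hdisj : Disjoint A B) (hadj : ∀ a ∈ A, ∀ b ∈ B, Q.Adj a b)
    (hA : k - k / 2 ≤ A.card) (hB : k / 2 ≤ B.card) :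
    Contains Q (pathGraph k) := by
  obtain ⟨A', hA'sub, hA'card⟩ := A.exists_subset_card_eq (n := k - k / 2) hA
  obtain ⟨B', hB'sub, hB'card⟩ := B.exists_subset_card_eq (n := k / 2) hB
  obtain ⟨u, huinj, humem⟩ := finset_exists_fn A' hA'card
  obtain ⟨w, hwinj, hwmem⟩ := finset_exists_fn B' hB'card
  have key : ∀ i : ℕ, i < k → (i % 2 = 0 → i / 2 < k - k / 2) ∧ (i % 2 = 1 → i / 2 < k / 2) := by
    intro i hi; omega
  set c : Fin k → V := fun i =>
    if h : i.val % 2 = 0 then u ⟨i.val / 2, ((key i.val i.isLt).1 h)⟩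
    else w ⟨i.val / 2, ((key i.val i.isLt).2 (by omega))⟩ with hc
  have hmemA : ∀ (i : Fin k) (h : i.val % 2 = 0), c i ∈ A := by
    intro i h; simp only [hc, dif_pos h]; exact hA'sub (humem _)
  have hmemB : ∀ (i : Fin k) (h : ¬ i.val % 2 = 0), c i ∈ B := by
    intro i h; simp only [hc, dif_neg h]; exact hB'sub (hwmem _)
  apply contains_path_of_fn Q k c
  · intro i j hij
    have hAB := Finset.disjoint_left.mp hdisj
    by_cases hi : (i:ℕ) % 2 = 0 <;> by_cases hj : (j:ℕ) % 2 = 0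
    · simp only [hc, dif_pos hi, dif_pos hj] at hij
      have h2 : (i:ℕ) / 2 = (j:ℕ) / 2 := congrArg Fin.val (huinj hij)
      ext; omega
    · exact absurd hij (fun hh => hAB (hmemA i hi) (hh ▸ hmemB j hj))
    · exact absurd hij.symm (fun hh => hAB (hmemA j hj) (hh ▸ hmemB i hi))
    · simp only [hc, dif_neg hi, dif_neg hj] at hij
      have h2 : (i:ℕ) / 2 = (j:ℕ) / 2 := congrArg Fin.val (hwinj hij)
      ext; omega
  · intro i h
    by_cases hi : i % 2 = 0
    · have hj : ¬ ((i+1) % 2 = 0) := by omega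
      have m1 := hmemA ⟨i, Nat.lt_of_succ_lt h⟩ hi
      have m2 := hmemB ⟨i+1, h⟩ (by simpa using hj)
      exact hadj _ m1 _ m2
    · have hj : (i+1) % 2 = 0 := by omega
      have m1 := hmemB ⟨i, Nat.lt_of_succ_lt h⟩ (by simpa using hi)
      have m2 := hmemA ⟨i+1, h⟩ hj
      exact (hadj _ m2 _ m1).symm

lemma contains_path_zig {V : Type*} (Q : SimpleGraph V) (q : ℕ)
    (d : Fin q → V) (y : Fin (q+1) → V)
    (hdinj : Function.Injective d) (hyinj : Function.Injective y)
    (hsep : ∀ i j, d i ≠ y j)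
    (hadj1 : ∀ i : Fin q, Q.Adj (y (Fin.castSucc i)) (d i))
    (hadj2 : ∀ i : Fin q, Q.Adj (d i) (y i.succ)) :
    Contains Q (pathGraph (2*q+1)) := by
  have key : ∀ i : ℕ, i < 2*q+1 → (i % 2 = 0 → i / 2 < q + 1) ∧ (i % 2 = 1 → i / 2 < q) := by
    intro i hi; omega
  set c : Fin (2*q+1) → V := fun i =>
    if h : i.val % 2 = 0 then y ⟨i.val / 2, ((key i.val i.isLt).1 h)⟩
    else d ⟨i.val / 2, ((key i.val i.isLt).2 (by omega))⟩ with hc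
  apply contains_path_of_fn Q _ c
  · intro i j hij
    by_cases hi : (i:ℕ) % 2 = 0 <;> by_cases hj : (j:ℕ) % 2 = 0
    · simp only [hc, dif_pos hi, dif_pos hj] at hij
      have h2 : (i:ℕ) / 2 = (j:ℕ) / 2 := congrArg Fin.val (hyinj hij)
      ext; omega
    · simp only [hc, dif_pos hi, dif_neg hj] at hij
      exact absurd hij.symm (hsep _ _)
    · simp only [hc, dif_neg hi, dif_pos hj] at hij
      exact absurd hij (hsep _ _)
    · simp only [hc, dif_neg hi, dif_neg hj] at hij
      have h2 : (i:ℕ) / 2 = (j:ℕ) / 2 := congrArg Fin.val (hdinj hij)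
      ext; omega
  · intro i h
    by_cases hi : i % 2 = 0
    · have hj : ¬ ((i+1) % 2 = 0) := by omega
      have hlt : i / 2 < q := by omega
      have e1 : c ⟨i, Nat.lt_of_succ_lt h⟩ = y (Fin.castSucc ⟨i/2, hlt⟩) := by
        simp only [hc, dif_pos hi]; congr 1
      have e2 : c ⟨i+1, h⟩ = d ⟨i/2, hlt⟩ := by
        simp only [hc, dif_neg hj]; congr 1; ext; simp; omega
      rw [e1, e2]; exact hadj1 _
    · have hj : (i+1) % 2 = 0 := by omega
      have hlt : i / 2 < q := by omega
      have e1 : c ⟨i, Nat.lt_of_succ_lt h⟩ = d ⟨i/2, hlt⟩ := by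
        simp only [hc, dif_neg hi]
      have e2 : c ⟨i+1, h⟩ = y (Fin.succ ⟨i/2, hlt⟩) := by
        simp only [hc, dif_pos hj]; congr 1; ext; simp; omega
      rw [e1, e2]; exact hadj2 _

lemma exists_indep {V : Type*} [DecidableEq V] (Q : SimpleGraph V) [DecidableRel Q.Adj]
    (k : ℕ) (hk : 2 ≤ k) (hQ : ¬ Contains Q (pathGraph k)) (A : Finset V) :
    ∃ I ⊆ A, (∀ a ∈ I, ∀ b ∈ I, ¬ Q.Adj a b) ∧ A.card ≤ (k - 1) * I.card := by
  induction A using Finset.strongInduction with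
  | _ A ih =>
  rcases A.eq_empty_or_nonempty with rfl | hne
  · exact ⟨∅, by simp⟩
  have hv : ∃ v ∈ A, (A.filter (fun x => Q.Adj v x)).card ≤ k - 2 := by
    by_contra hcon
    push_neg at hcon
    have build : ∀ j : ℕ, j ≤ k →
        ∃ L : List V, L.length = j ∧ L.Nodup ∧ (∀ x ∈ L, x ∈ A) ∧ L.Chain' Q.Adj := by
      intro j hj
      induction j with
      | zero => exact ⟨[], by simp, by simp, by simp, List.isChain_nil⟩
      | succ j ihj =>
        obtain ⟨L, hlen, hnodup, hmem, hchain⟩ := ihj (Nat.le_of_succ_le hj)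
        match L, hlen, hnodup, hmem, hchain with
        | [], hlen0, _, _, _ =>
          obtain ⟨a, ha⟩ := hne
          have hj0 : j = 0 := by simpa using hlen0.symm
          exact ⟨[a], by simp [hj0], by simp, by simp [ha], List.isChain_singleton a⟩
        | (h0 :: t), hlen, hnodup, hmem, hchain =>
          have hh0 : h0 ∈ A := hmem h0 (by simp)
          have hcard := hcon h0 hh0
          have hlen' : t.length + 1 = j := by simpa using hlen
          have hmemt : h0 ∈ (h0 :: t).toFinset := by simp
          have h1 : ((h0 :: t).toFinset.erase h0).card ≤ j - 1 := by
            rw [Finset.card_erase_of_mem hmemt]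
            have := (h0 :: t).toFinset_card_le
            simp at this ⊢
            omega
          have h2 := Finset.card_le_card_sdiff_add_card
            (s := A.filter (fun x => Q.Adj h0 x)) (t := (h0 :: t).toFinset.erase h0)
          have hcand_ne : ((A.filter (fun x => Q.Adj h0 x)) \ ((h0 :: t).toFinset.erase h0)).Nonempty := by
            rw [← Finset.card_pos]
            omega
          obtain ⟨x, hx⟩ := hcand_ne
          rw [Finset.mem_sdiff, Finset.mem_filter] at hx
          obtain ⟨⟨hxA, hxadj⟩, hxer⟩ := hx
          have hxne : x ≠ h0 := fun h => Q.irrefl (h ▸ hxadj)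
          have hxnotmem : x ∉ (h0 :: t) := by
            intro hmm
            exact hxer (Finset.mem_erase.mpr ⟨hxne, List.mem_toFinset.mpr hmm⟩)
          refine ⟨x :: h0 :: t, by simp [hlen'], ?_, ?_, ?_⟩
          · exact List.nodup_cons.mpr ⟨hxnotmem, hnodup⟩
          · intro z hz
            rcases List.mem_cons.mp hz with rfl | hz
            · exact hxA
            · exact hmem z hz
          · exact List.isChain_cons_cons.mpr ⟨hxadj.symm, hchain⟩
    obtain ⟨L, hlen, hnodup, hmemL, hchain⟩ := build k le_rfl
    apply hQ
    apply contains_path_of_fn Q k (fun i => L.get (Fin.cast hlen.symm i))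
    · intro i j hij
      have := List.nodup_iff_injective_get.mp hnodup hij
      exact Fin.cast_injective _ this
    · intro i h
      have hch := List.isChain_iff_getElem.mp hchain i (by omega)
      exact hch
  obtain ⟨v, hvA, hvdeg⟩ := hv
  set B := insert v (A.filter (fun x => Q.Adj v x)) with hB
  have hssub : A \ B ⊂ A :=
    Finset.sdiff_ssubset (by rw [hB]; exact Finset.insert_subset hvA (Finset.filter_subset _ _))
      ⟨v, by simp [hB]⟩
  obtain ⟨I', hI'sub, hI'indep, hI'card⟩ := ih (A \ B) hssub
  have hvnot : v ∉ A \ B := by simp [hB]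
  have hvnotI' : v ∉ I' := fun h => hvnot (hI'sub h)
  refine ⟨insert v I', ?_, ?_, ?_⟩
  · exact Finset.insert_subset hvA (hI'sub.trans (Finset.sdiff_subset))
  · intro a ha b hb
    rcases Finset.mem_insert.mp ha with rfl | ha' <;> rcases Finset.mem_insert.mp hb with rfl | hb'
    · exact Q.irrefl
    · intro hadj
      have hbA : b ∈ A := (hI'sub.trans Finset.sdiff_subset) hb'
      have : b ∈ B := by rw [hB]; exact Finset.mem_insert_of_mem (Finset.mem_filter.mpr ⟨hbA, hadj⟩)
      exact (Finset.mem_sdiff.mp (hI'sub hb')).2 this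
    · intro hadj
      have haA : a ∈ A := (hI'sub.trans Finset.sdiff_subset) ha'
      have : a ∈ B := by rw [hB]; exact Finset.mem_insert_of_mem (Finset.mem_filter.mpr ⟨haA, hadj.symm⟩)
      exact (Finset.mem_sdiff.mp (hI'sub ha')).2 this
    · exact hI'indep a ha' b hb'
  · rw [Finset.card_insert_of_notMem hvnotI']
    have h1 := Finset.card_le_card_sdiff_add_card (s := A) (t := B)
    have h2 : B.card ≤ k - 1 := by
      rw [hB]
      have := Finset.card_insert_le v (A.filter (fun x => Q.Adj v x))
      omega
    have h3 : (k - 1) * (I'.card + 1) = (k - 1) * I'.card + (k - 1) := by ring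
    omega

lemma ramseyProp_mono {β γ : Type*} {H₁ : SimpleGraph β} {H₂ : SimpleGraph γ} {N N' : ℕ}
    (h : N ≤ N') (hR : RamseyProp N H₁ H₂) : RamseyProp N' H₁ H₂ := by
  intro F'
  rcases hR (F'.comap (Fin.castLE h)) with ⟨f, hf⟩ | ⟨f, hf⟩
  · exact Or.inl ⟨f.trans (Fin.castLEEmb h), fun a b hab => hf a b hab⟩
  · refine Or.inr ⟨f.trans (Fin.castLEEmb h), fun a b hab => ?_⟩
    have := hf a b hab
    rw [compl_adj] at this ⊢
    exact ⟨fun hh => this.1 ((Fin.castLEEmb h).injective hh), this.2⟩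

lemma ramsey_exists {β : Type*} [Fintype β] (Hb : SimpleGraph β) (k : ℕ) (hk : 2 ≤ k) :
    ∃ N, 0 < N ∧ RamseyProp N Hb (pathGraph k) := by
  classical
  refine ⟨(k - 1) * Fintype.card β + 1, Nat.succ_pos _, ?_⟩
  intro F
  by_cases hP : Contains Fᶜ (pathGraph k)
  · exact Or.inr hP
  left
  obtain ⟨I, -, hindep, hcard⟩ := exists_indep Fᶜ k hk hP Finset.univ
  have hIcard : Fintype.card β ≤ I.card := by
    have h1 : (Finset.univ : Finset (Fin ((k-1) * Fintype.card β + 1))).card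
        = (k - 1) * Fintype.card β + 1 := by simp
    by_contra hcc
    push_neg at hcc
    have : (k - 1) * I.card < (k - 1) * Fintype.card β + 1 :=
      Nat.lt_succ_of_le (Nat.mul_le_mul_left _ (Nat.le_of_lt_succ (Nat.lt_succ_of_lt hcc)))
    omega
  have : ∃ g : β ↪ ↥I, True := by
    have := Fintype.card_coe I
    exact ⟨(Function.Embedding.nonempty_of_card_le (by omega)).some, trivial⟩
  obtain ⟨g, -⟩ := this
  refine ⟨g.trans (Function.Embedding.subtype _), fun a b hab => ?_⟩
  have hne : ((g a : ↥I) : Fin ((k - 1) * Fintype.card β + 1)) ≠ ((g b : ↥I) : Fin ((k - 1) * Fintype.card β + 1)) := by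
    intro hh
    exact Hb.ne_of_adj hab (g.injective (Subtype.ext hh))
  have h1 := hindep ((g a) : Fin ((k - 1) * Fintype.card β + 1)) (g a).2 ((g b) : Fin ((k - 1) * Fintype.card β + 1)) (g b).2
  rw [compl_adj] at h1
  push_neg at h1
  exact h1 hne

lemma contains_in_subset {V β : Type*} [Fintype V] [DecidableEq V] (F : SimpleGraph V)
    {H1 : SimpleGraph β} {k M : ℕ}
    (hR : RamseyProp M H1 (pathGraph k)) (hP : ¬ Contains Fᶜ (pathGraph k))
    (U : Finset V) (hU : U.card = M) :
    ∃ φ : β ↪ V, (∀ a b, H1.Adj a b → F.Adj (φ a) (φ b)) ∧ ∀ a, φ a ∈ U := by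
  classical
  obtain ⟨u, huinj, humem⟩ := finset_exists_fn U hU
  rcases hR (F.comap u) with ⟨f, hf⟩ | ⟨f, hf⟩
  · exact ⟨f.trans ⟨u, huinj⟩, fun a b hab => hf a b hab, fun a => humem _⟩
  · exact absurd (⟨f.trans ⟨u, huinj⟩, fun a b hab => by
      have := hf a b hab
      rw [compl_adj] at this ⊢
      exact ⟨fun hh => this.1 (huinj hh), this.2⟩⟩ : Contains Fᶜ (pathGraph k)) hP

set_option maxHeartbeats 2000000 in
theorem stmt5 {α : Type*} [Fintype α] [DecidableEq α] (k l m n : ℕ)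
    (hk : 3 ≤ k) (hl : 1 ≤ 2 * l) (hn : 2 * l ≤ n) (hm : n ≤ m)
    (G : SimpleGraph α) [DecidableRel G.Adj] (hcard : Fintype.card α = n)
    -- `S` is a set of `l` leaves of `G` whose incident (end-)edges form a matching
    (S : Finset α) (f : α → α) (hS : S.card = l)
    (hleaf : ∀ v ∈ S, G.degree v = 1)
    (hadj : ∀ v ∈ S, G.Adj v (f v))
    (hout : ∀ v ∈ S, f v ∉ S)
    (hinj : Set.InjOn f ↑S)
    -- hypothesis: `r(H, P_k) ≤ m - 2k + 2` for `H = G` minus the `l` leaves of the matching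
    (hH : (ramseyNumber (G.induce ((↑S : Set α)ᶜ)) (pathGraph k) : ℤ)
        ≤ (m : ℤ) - 2 * k + 2) :
    ramseyNumber G (pathGraph k) ≤ m + k / 2 - 1 := by
  classical
  set Hg := G.induce ((↑S : Set α)ᶜ) with hHgdef
  have hScard : Fintype.card ↥((↑S : Set α)ᶜ) = n - l := by
    rw [Fintype.card_compl_set]
    simp [hcard, hS]
  obtain ⟨N₁, hN₁pos, hN₁⟩ := ramsey_exists Hg k (by omega)
  have hTne : {N : ℕ | 0 < N ∧ RamseyProp N Hg (pathGraph k)}.Nonempty := ⟨N₁, hN₁pos, hN₁⟩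
  have hrmem : ramseyNumber Hg (pathGraph k) ∈
      {N : ℕ | 0 < N ∧ RamseyProp N Hg (pathGraph k)} := Nat.sInf_mem hTne
  set r := ramseyNumber Hg (pathGraph k) with hrdef
  obtain ⟨hrpos, hrR⟩ := hrmem
  have hlow : n - l ≤ r := by
    rcases hrR ⊤ with ⟨emb, -⟩ | ⟨emb, hemb⟩
    · have := Fintype.card_le_of_embedding emb
      rw [Fintype.card_fin, hScard] at this
      exact this
    · exfalso
      have hadj01 : (pathGraph k).Adj ⟨0, by omega⟩ ⟨1, by omega⟩ := by
        rw [pathGraph_adj]; simp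
      have h2 := hemb _ _ hadj01
      rw [compl_adj] at h2
      exact h2.2 ((top_adj _ _).mpr h2.1)
  have hq2 : 2 * (k/2) ≤ k ∧ k ≤ 2 * (k/2) + 1 := by omega
  set q := k / 2 with hqdef
  have hm2 : 2 * k + r ≤ m + 2 := by omega
  set M₀ := m + 2 - 2*k with hM₀def
  have hRM₀ : RamseyProp M₀ Hg (pathGraph k) := ramseyProp_mono (by omega) hrR
  have hnlM₀ : n - l ≤ M₀ := by omega
  set N := m + q - 1 with hNdef
  clear_value r q M₀ N
  have main : RamseyProp N G (pathGraph k) := by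
    intro F
    by_contra hcon
    rw [not_or] at hcon
    obtain ⟨hnG, hnP⟩ := hcon
    obtain ⟨Z₀, -, hZ₀card⟩ := Finset.exists_subset_card_eq (s := (Finset.univ : Finset (Fin N)))
      (n := 2*k-2) (by simp; omega)
    have hkey : ∀ j : ℕ, j ≤ q → ∃ D : Finset (Fin N), D.card = j ∧ Disjoint D Z₀ ∧
        ∀ d ∈ D, 2*k - q ≤ (Z₀.filter (fun z => Fᶜ.Adj d z)).card := by
      intro j
      induction j with
      | zero => exact fun _ => ⟨∅, by simp⟩
      | succ j ihj =>
        intro hj1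
        obtain ⟨D, hDcard, hDdisj, hDhub⟩ := ihj (by omega)
        have hUc : M₀ ≤ (Finset.univ \ (Z₀ ∪ D)).card := by
          have h1 := Finset.card_union_le Z₀ D
          have h2 := Finset.le_card_sdiff (Z₀ ∪ D) (Finset.univ : Finset (Fin N))
          have h3 : (Finset.univ : Finset (Fin N)).card = N := by simp
          clear * - h1 h2 h3 hZ₀card hDcard hj1 hM₀def hNdef hqdef hm2 hrpos hk
          omega
        obtain ⟨U, hUsub, hUcard⟩ := Finset.exists_subset_card_eq (n := M₀) hUc
        obtain ⟨φ, hφadj, hφmem⟩ := contains_in_subset F hRM₀ hnP U hUcard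
        set Img : Finset (Fin N) := Finset.univ.image (fun b : ↥((↑S : Set α)ᶜ) => φ b) with hImgdef
        have hImgcard : Img.card = n - l := by
          rw [hImgdef, Finset.card_image_of_injective _ φ.injective, Finset.card_univ, hScard]
        have hImgU : ∀ x ∈ Img, x ∈ U := by
          intro x hx
          obtain ⟨b, -, rfl⟩ := Finset.mem_image.mp hx
          exact hφmem b
        have hImgZD : ∀ x ∈ Img, x ∉ Z₀ ∧ x ∉ D := by
          intro x hx
          have := hUsub (hImgU x hx)
          rw [Finset.mem_sdiff, Finset.mem_union] at this
          exact ⟨fun h => this.2 (Or.inl h), fun h => this.2 (Or.inr h)⟩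
        set Rfin := Finset.univ \ Img with hRfindef
        have hRcard : Rfin.card = N - (n - l) := by
          rw [hRfindef, Finset.card_sdiff_of_subset (Finset.subset_univ _), hImgcard]
          simp
        have hpS : ∀ v : ↥S, (f ↑v : α) ∈ ((↑S : Set α)ᶜ) := fun v => by
          simpa using hout ↑v v.2
        set p : ↥S → Fin N := fun v => φ ⟨f ↑v, hpS v⟩ with hpdef
        have hpinj : Function.Injective p := by
          intro v w hvw
          have h1 := φ.injective hvw
          have h2 : f (v : α) = f (w : α) := congrArg Subtype.val h1
          exact Subtype.ext (hinj v.2 w.2 h2)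
        have hpImg : ∀ v, p v ∈ Img := fun v => Finset.mem_image_of_mem _ (Finset.mem_univ _)
        set t : ↥S → Finset (Fin N) := fun v => Rfin.filter (fun x => F.Adj (p v) x) with htdef
        by_cases hhall : ∀ s : Finset ↥S, s.card ≤ (s.biUnion t).card
        · exfalso
          apply hnG
          obtain ⟨g, hginj, hgmem⟩ := (Finset.all_card_le_biUnion_card_iff_existsInjective' t).mp hhall
          have hgR : ∀ v, g v ∈ Rfin := fun v => (Finset.mem_filter.mp (hgmem v)).1
          have hgadj : ∀ v, F.Adj (p v) (g v) := fun v => (Finset.mem_filter.mp (hgmem v)).2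
          have hmemcompl : ∀ x : α, x ∉ S → x ∈ ((↑S : Set α)ᶜ) := fun x hx => by simpa using hx
          set Φ : α → Fin N := fun x =>
            if hx : x ∈ S then g ⟨x, hx⟩ else φ ⟨x, hmemcompl x hx⟩ with hΦdef
          have hΦpos : ∀ (x) (hx : x ∈ S), Φ x = g ⟨x, hx⟩ := fun x hx => dif_pos hx
          have hΦneg : ∀ (x) (hx : x ∉ S), Φ x = φ ⟨x, hmemcompl x hx⟩ := fun x hx => dif_neg hx
          have hleafeq : ∀ (a : α), a ∈ S → ∀ (b : α), G.Adj a b → b = f a := by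
            intro a ha b hab
            have h1 : (G.neighborFinset a).card = 1 := hleaf a ha
            obtain ⟨x, hx⟩ := Finset.card_eq_one.mp h1
            have hb2 : b ∈ G.neighborFinset a := by
              rw [SimpleGraph.mem_neighborFinset]; exact hab
            have hfa : f a ∈ G.neighborFinset a := by
              rw [SimpleGraph.mem_neighborFinset]; exact hadj a ha
            rw [hx, Finset.mem_singleton] at hb2 hfa
            exact hb2.trans hfa.symm
          have hstep : ∀ (v : ↥S) (b : α) (hbc : b ∈ ((↑S : Set α)ᶜ)),
              b = f ↑v → F.Adj (g v) (φ ⟨b, hbc⟩) := by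
            intro v b hbc hbe
            have he : (⟨b, hbc⟩ : ↥((↑S : Set α)ᶜ)) = ⟨f ↑v, hpS v⟩ := Subtype.ext hbe
            rw [he]
            exact (hgadj v).symm
          have hΦinj : Function.Injective Φ := by
            intro a b heq
            by_cases ha : a ∈ S <;> by_cases hb : b ∈ S
            · rw [hΦpos a ha, hΦpos b hb] at heq
              exact congrArg Subtype.val (hginj heq)
            · exfalso
              rw [hΦpos a ha, hΦneg b hb] at heq
              have h2 := hgR ⟨a, ha⟩
              rw [heq, hRfindef, Finset.mem_sdiff] at h2
              exact h2.2 (Finset.mem_image_of_mem _ (Finset.mem_univ _))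
            · exfalso
              rw [hΦneg a ha, hΦpos b hb] at heq
              have h2 := hgR ⟨b, hb⟩
              rw [← heq, hRfindef, Finset.mem_sdiff] at h2
              exact h2.2 (Finset.mem_image_of_mem _ (Finset.mem_univ _))
            · rw [hΦneg a ha, hΦneg b hb] at heq
              exact congrArg Subtype.val (φ.injective heq)
          refine ⟨⟨Φ, hΦinj⟩, ?_⟩
          intro a b hab
          show F.Adj (Φ a) (Φ b)
          by_cases ha : a ∈ S <;> by_cases hb : b ∈ S
          · exact absurd ((hleafeq a ha b hab) ▸ hb) (hout a ha)
          · rw [hΦpos a ha, hΦneg b hb]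
            exact hstep ⟨a, ha⟩ b (hmemcompl b hb) (hleafeq a ha b hab)
          · rw [hΦneg a ha, hΦpos b hb]
            exact (hstep ⟨b, hb⟩ a (hmemcompl a ha) (hleafeq b hb a hab.symm)).symm
          · rw [hΦneg a ha, hΦneg b hb]
            exact hφadj ⟨a, hmemcompl a ha⟩ ⟨b, hmemcompl b hb⟩ hab
        · push_neg at hhall
          obtain ⟨W, hW⟩ := hhall
          have hw1 : 1 ≤ W.card := lt_of_le_of_lt (Nat.zero_le _) hW
          have hwl : W.card ≤ l := by
            have h1 := W.card_le_univ
            rw [Fintype.card_coe, hS] at h1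
            exact h1
          have hbi : (W.biUnion t).card ≤ W.card - 1 := Nat.le_pred_of_lt hW
          set Bset := Rfin \ (W.biUnion t) with hBdef
          have hbipAdj : ∀ a ∈ W.image p, ∀ b ∈ Bset, Fᶜ.Adj a b := by
            intro a ha b hb
            obtain ⟨v, hvW, rfl⟩ := Finset.mem_image.mp ha
            rw [Finset.mem_sdiff] at hb
            rw [compl_adj]
            constructor
            · intro hh
              have h3 := hpImg v
              rw [hh] at h3
              exact (Finset.mem_sdiff.mp hb.1).2 h3
            · intro hadjF
              exact hb.2 (Finset.mem_biUnion.mpr ⟨v, hvW,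
                Finset.mem_filter.mpr ⟨hb.1, hadjF⟩⟩)
          have hBcard : Rfin.card - (W.card - 1) ≤ Bset.card := by
            have h9 := Finset.le_card_sdiff (W.biUnion t) Rfin
            rw [← hBdef] at h9
            clear * - h9 hbi hw1
            omega
          have hWimg : (W.image p).card = W.card := Finset.card_image_of_injective _ hpinj
          have hdisjWB : Disjoint (W.image p) Bset := by
            rw [Finset.disjoint_left]
            intro a ha hab
            obtain ⟨v, hvW, rfl⟩ := Finset.mem_image.mp ha
            rw [hBdef, Finset.mem_sdiff] at hab
            exact (Finset.mem_sdiff.mp hab.1).2 (hpImg v)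
          by_cases hwq : q ≤ W.card
          · exfalso
            apply hnP
            by_cases hwkq : k - q ≤ W.card
            · refine contains_path_bipartite Fᶜ k (W.image p) Bset hdisjWB hbipAdj ?_ ?_
              · rw [hWimg]
                clear * - hwkq hqdef
                omega
              · have h9 := hBcard
                rw [hRcard] at h9
                clear * - h9 hwl hNdef hqdef hn hm hk hw1
                omega
            · refine contains_path_bipartite Fᶜ k Bset (W.image p) hdisjWB.symm
                (fun a ha b hb => (hbipAdj b hb a ha).symm) ?_ ?_
              · have h9 := hBcard
                rw [hRcard] at h9
                clear * - h9 hwl hwkq hNdef hqdef hn hm hk hw1 hm2 hnlM₀ hM₀def hrpos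
                omega
              · rw [hWimg]
                clear * - hwq hqdef
                omega
          · obtain ⟨v₀, hv₀⟩ := Finset.card_pos.mp hw1
            have htv₀ : (t v₀).card ≤ W.card - 1 :=
              le_trans (Finset.card_le_card (Finset.subset_biUnion_of_mem t hv₀)) hbi
            have hhubZ : 2*k - q ≤ (Z₀.filter (fun z => Fᶜ.Adj (p v₀) z)).card := by
              have hsub2 : Z₀ \ (Z₀.filter (fun z => Fᶜ.Adj (p v₀) z)) ⊆ t v₀ := by
                intro z hz
                rw [Finset.mem_sdiff] at hz
                obtain ⟨hzZ, hzf⟩ := hz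
                have hzImg : z ∉ Img := fun hc => (hImgZD z hc).1 hzZ
                have hzne : p v₀ ≠ z := fun hh => hzImg (hh ▸ hpImg v₀)
                have hnc : ¬ Fᶜ.Adj (p v₀) z := fun hh =>
                  hzf (Finset.mem_filter.mpr ⟨hzZ, hh⟩)
                rw [compl_adj] at hnc
                push_neg at hnc
                refine Finset.mem_filter.mpr ⟨?_, hnc hzne⟩
                rw [hRfindef, Finset.mem_sdiff]
                exact ⟨Finset.mem_univ _, hzImg⟩
              have h5 := Finset.card_le_card hsub2
              have h6 := Finset.le_card_sdiff (Z₀.filter (fun z => Fᶜ.Adj (p v₀) z)) Z₀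
              clear * - h5 h6 htv₀ hwq hZ₀card hq2 hw1 hk
              omega
            refine ⟨insert (p v₀) D, ?_, ?_, ?_⟩
            · rw [Finset.card_insert_of_notMem (fun hc => (hImgZD _ (hpImg v₀)).2 hc), hDcard]
            · rw [Finset.disjoint_left]
              intro x hx hxZ
              rcases Finset.mem_insert.mp hx with rfl | hxD
              · exact (hImgZD _ (hpImg v₀)).1 hxZ
              · exact (Finset.disjoint_left.mp hDdisj) hxD hxZ
            · intro d hd
              rcases Finset.mem_insert.mp hd with rfl | hdD
              · exact hhubZ
              · exact hDhub d hdD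
    obtain ⟨D, hDcard, hDdisj, hDhub⟩ := hkey q le_rfl
    obtain ⟨d, hdinj, hdmem⟩ := finset_exists_fn D hDcard
    have hq1 : 0 < q := by clear * - hq2 hk; omega
    have hfilter0 := hDhub (d ⟨0, hq1⟩) (hdmem _)
    have hfilter0le := Finset.card_filter_le Z₀ (fun z => Fᶜ.Adj (d ⟨0, hq1⟩) z)
    have hq2' : 2 ≤ q := by clear * - hfilter0 hfilter0le hZ₀card hq2 hk; omega
    set t' : Fin (q+1) → Finset (Fin N) := fun i => Z₀.filter
      (fun z => ∀ jj : Fin q, (jj.val = i.val ∨ jj.val + 1 = i.val) → Fᶜ.Adj (d jj) z) with ht'def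
    have ht'card : ∀ i : Fin (q+1), 2*k - 2*q + 2 ≤ (t' i).card := by
      intro i
      set Jset := Finset.univ.filter
        (fun jj : Fin q => jj.val = i.val ∨ jj.val + 1 = i.val) with hJdef
      have hJ2 : Jset.card ≤ 2 := by
        have hmap : ∀ jj ∈ Jset, (jj : Fin q).val ∈ ({i.val, i.val - 1} : Finset ℕ) := by
          intro jj hjj
          rw [hJdef, Finset.mem_filter] at hjj
          rcases hjj.2 with h | h
          · simp [h]
          · simp only [Finset.mem_insert, Finset.mem_singleton]
            omega
        have hinj2 : Set.InjOn (fun jj : Fin q => jj.val) ↑Jset := fun a _ b _ hab => Fin.ext hab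
        have h21 := Finset.card_le_card_of_injOn _ hmap hinj2
        have h22 : ({i.val, i.val - 1} : Finset ℕ).card ≤ 2 :=
          (Finset.card_insert_le _ _).trans (by simp)
        omega
      have hsub3 : Z₀ \ t' i ⊆ Jset.biUnion
          (fun jj => Z₀ \ Z₀.filter (fun z => Fᶜ.Adj (d jj) z)) := by
        intro z hz
        rw [Finset.mem_sdiff] at hz
        obtain ⟨hzZ, hzt⟩ := hz
        have h23 : ¬ (∀ jj : Fin q, (jj.val = i.val ∨ jj.val + 1 = i.val) → Fᶜ.Adj (d jj) z) :=
          fun hc => hzt (Finset.mem_filter.mpr ⟨hzZ, hc⟩)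
        push_neg at h23
        obtain ⟨jj, hjjrel, hjjadj⟩ := h23
        refine Finset.mem_biUnion.mpr ⟨jj, ?_, ?_⟩
        · rw [hJdef]; exact Finset.mem_filter.mpr ⟨Finset.mem_univ _, hjjrel⟩
        · exact Finset.mem_sdiff.mpr ⟨hzZ, fun hc => hjjadj (Finset.mem_filter.mp hc).2⟩
      have h10 := Finset.card_le_card hsub3
      have h11 := Finset.card_biUnion_le (s := Jset)
        (t := fun jj => Z₀ \ Z₀.filter (fun z => Fᶜ.Adj (d jj) z))
      have h12 : ∀ jj ∈ Jset, (Z₀ \ Z₀.filter (fun z => Fᶜ.Adj (d jj) z)).card ≤ q - 2 := by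
        intro jj _
        have hd1 := hDhub (d jj) (hdmem jj)
        have h6 := Finset.card_sdiff_of_subset (Finset.filter_subset (fun z => Fᶜ.Adj (d jj) z) Z₀)
        have h7 := Finset.card_filter_le Z₀ (fun z => Fᶜ.Adj (d jj) z)
        clear * - hd1 h6 h7 hZ₀card hq2 hk
        omega
      have h13 := Finset.sum_le_card_nsmul Jset _ (q-2) h12
      simp only [smul_eq_mul] at h13
      have h16 := Nat.mul_le_mul_right (q-2) hJ2
      have h14 : (Z₀ \ t' i).card = Z₀.card - (t' i).card := by
        rw [ht'def]
        exact Finset.card_sdiff_of_subset (Finset.filter_subset _ _)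
      have h15 : (t' i).card ≤ Z₀.card := by
        rw [ht'def]
        exact Finset.card_le_card (Finset.filter_subset _ _)
      clear * - h10 h11 h13 h14 h15 h16 hZ₀card hq2 hq2' hk
      omega
    have hhall2 : ∀ s : Finset (Fin (q+1)), s.card ≤ (s.biUnion t').card := by
      intro s
      rcases s.eq_empty_or_nonempty with rfl | ⟨i0, hi0⟩
      · simp
      · have h17 := Finset.card_le_card (Finset.subset_biUnion_of_mem t' hi0)
        have h18 := ht'card i0
        have h19 : s.card ≤ q + 1 := by
          have h24 := s.card_le_univ
          rw [Fintype.card_fin] at h24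
          exact h24
        clear * - h17 h18 h19 hq2 hk
        omega
    obtain ⟨y, hyinj, hymem⟩ := (Finset.all_card_le_biUnion_card_iff_existsInjective' t').mp hhall2
    have hyZ : ∀ i, y i ∈ Z₀ := fun i => (Finset.mem_filter.mp (hymem i)).1
    have hyadj : ∀ (i : Fin (q+1)) (jj : Fin q),
        (jj.val = i.val ∨ jj.val + 1 = i.val) → Fᶜ.Adj (d jj) (y i) :=
      fun i => (Finset.mem_filter.mp (hymem i)).2
    have hsep : ∀ i j2, d i ≠ y j2 := by
      intro i j2 hc
      have h20 := hdmem i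
      rw [hc] at h20
      exact (Finset.disjoint_left.mp hDdisj) h20 (hyZ j2)
    have ha1 : ∀ i : Fin q, Fᶜ.Adj (y (Fin.castSucc i)) (d i) :=
      fun i => (hyadj (Fin.castSucc i) i (Or.inl rfl)).symm
    have ha2 : ∀ i : Fin q, Fᶜ.Adj (d i) (y i.succ) :=
      fun i => hyadj i.succ i (Or.inr rfl)
    exact hnP (contains_path_mono (by clear * - hq2 hk; omega)
      (contains_path_zig Fᶜ q d y hdinj hyinj hsep ha1 ha2))
  have hfin : ramseyNumber G (pathGraph k) ≤ N := Nat.sInf_le ⟨by omega, main⟩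
  omega
end

section
/- For every integer k ≥ 3 and every real number C > 1, if n ≥ 2Ck/(C−1)², then for every tree T on n vertices, r(T, P_k) ≤ C·n. -/
open SimpleGraph

section Aux

open Finset

set_option linter.unusedSectionVars false

variable {V : Type*}

lemma getVert_mem_support' {G : SimpleGraph V} {u v : V} (p : G.Walk u v) {i : ℕ}
    (hi : i ≤ p.length) : p.getVert i ∈ p.support :=
  Walk.mem_support_iff_exists_getVert.mpr ⟨i, rfl, hi⟩

lemma getVert_inj' {G : SimpleGraph V} {u v : V} {p : G.Walk u v} (hp : p.IsPath) :
    ∀ {i j : ℕ}, i ≤ p.length → j ≤ p.length → p.getVert i = p.getVert j → i = j := by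
  induction p with
  | nil => intro i j hi hj _; simp only [Walk.length_nil, Nat.le_zero] at hi hj; omega
  | @cons u x v h q ih =>
    rw [Walk.cons_isPath_iff] at hp
    intro i j hi hj hij
    match i, j with
    | 0, 0 => rfl
    | 0, (j+1) =>
      exfalso
      apply hp.2
      rw [Walk.getVert_zero, Walk.getVert_cons_succ] at hij
      exact hij ▸ getVert_mem_support' q (by simpa [Walk.length_cons] using hj)
    | (i+1), 0 =>
      exfalso
      apply hp.2
      rw [Walk.getVert_zero, Walk.getVert_cons_succ] at hij
      exact hij ▸ getVert_mem_support' q (by simpa [Walk.length_cons] using hi)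
    | (i+1), (j+1) =>
      rw [Walk.getVert_cons_succ, Walk.getVert_cons_succ] at hij
      have := ih hp.1 (by simpa [Walk.length_cons] using hi)
        (by simpa [Walk.length_cons] using hj) hij
      omega

lemma exists_path_embedding [Fintype V] [DecidableEq V] (G : SimpleGraph V) [DecidableRel G.Adj] (k : ℕ)
    (s : Finset V) (hs : s.Nonempty)
    (hdeg : ∀ v ∈ s, k ≤ #(s ∩ G.neighborFinset v) + 1) :
    ∃ f : Fin k ↪ V, ∀ a b : Fin k, (pathGraph k).Adj a b → G.Adj (f a) (f b) := by
  classical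
  obtain ⟨u0, hu0⟩ := hs
  set S : Set ℕ := {L | ∃ (u v : V) (p : G.Walk u v), p.IsPath ∧ (∀ x ∈ p.support, x ∈ s)
    ∧ p.length = L} with hS
  have hne : S.Nonempty := ⟨0, u0, u0, Walk.nil, Walk.IsPath.nil, by simpa using hu0, rfl⟩
  have hbdd : BddAbove S := by
    refine ⟨Fintype.card V, fun L hL => ?_⟩
    obtain ⟨u, v, p, hp, _, hlen⟩ := hL
    exact hlen ▸ (hp.length_lt).le
  obtain ⟨u, v, p, hp, hsup, hlen⟩ := Nat.sSup_mem hne hbdd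
  -- maximality: all neighbors of u within s are on p
  have hstep : ∀ w ∈ s, G.Adj u w → w ∈ p.support := by
    intro w hw hadj
    by_contra hns
    have hq : (Walk.cons hadj.symm p).IsPath := (Walk.cons_isPath_iff _ _).mpr ⟨hp, hns⟩
    have hmem : p.length + 1 ∈ S := by
      refine ⟨w, v, Walk.cons hadj.symm p, hq, ?_, by simp⟩
      intro x hx
      rw [Walk.support_cons, List.mem_cons] at hx
      rcases hx with rfl | hx
      · exact hw
      · exact hsup x hx
    have := le_csSup hbdd hmem
    omega
  have husup : u ∈ s := hsup u p.start_mem_support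
  have hsubset : insert u (s ∩ G.neighborFinset u) ⊆ p.support.toFinset := by
    intro x hx
    rw [Finset.mem_insert] at hx
    rcases hx with rfl | hx
    · exact List.mem_toFinset.mpr p.start_mem_support
    · rw [Finset.mem_inter, mem_neighborFinset] at hx
      exact List.mem_toFinset.mpr (hstep x hx.1 hx.2)
  have hcard : #(s ∩ G.neighborFinset u) + 1 ≤ p.length + 1 := by
    have h1 := Finset.card_le_card hsubset
    rw [Finset.card_insert_of_notMem (by simp [mem_neighborFinset])] at h1
    rwa [List.card_toFinset, hp.support_nodup.dedup, Walk.length_support] at h1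
  have hk : k ≤ p.length + 1 := le_trans (hdeg u husup) hcard
  refine ⟨⟨fun i => p.getVert i, ?_⟩, ?_⟩
  · intro i j hij
    exact Fin.ext (getVert_inj' hp (by omega) (by omega) hij)
  · intro a b hab
    rw [pathGraph_adj] at hab
    show G.Adj (p.getVert a) (p.getVert b)
    rcases hab with hab | hab
    · rw [← hab]
      exact p.adj_getVert_succ (by omega)
    · rw [← hab]
      exact (p.adj_getVert_succ (by omega)).symm

variable [Fintype V] [DecidableEq V]

/-- Sum over `s` of the number of neighbours within `s`. -/
def Dsum (G : SimpleGraph V) [DecidableRel G.Adj] (s : Finset V) : ℕ :=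
  ∑ v ∈ s, #(s ∩ G.neighborFinset v)

lemma Dsum_erase (G : SimpleGraph V) [DecidableRel G.Adj] {s : Finset V} {v : V} (hv : v ∈ s) :
    Dsum G s = Dsum G (s.erase v) + 2 * #(s ∩ G.neighborFinset v) := by
  have hvv : v ∉ G.neighborFinset v := by simp
  have key : ∀ u ∈ s.erase v,
      #(s ∩ G.neighborFinset u) = #(s.erase v ∩ G.neighborFinset u)
        + (if G.Adj v u then 1 else 0) := by
    intro u hu
    rw [Finset.erase_inter]
    by_cases h : G.Adj v u
    · have hv' : v ∈ s ∩ G.neighborFinset u := by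
        rw [Finset.mem_inter, mem_neighborFinset]
        exact ⟨hv, h.symm⟩
      rw [Finset.card_erase_of_mem hv', if_pos h]
      have : 0 < #(s ∩ G.neighborFinset u) := Finset.card_pos.mpr ⟨v, hv'⟩
      omega
    · rw [Finset.erase_eq_of_notMem, if_neg h, add_zero]
      rw [Finset.mem_inter, mem_neighborFinset]
      exact fun hc => h hc.2.symm
  have hsplit : Dsum G s = #(s ∩ G.neighborFinset v)
      + ∑ u ∈ s.erase v, #(s ∩ G.neighborFinset u) := by
    rw [Dsum, ← Finset.add_sum_erase _ _ hv]
  have h2 : (∑ u ∈ s.erase v, if G.Adj v u then 1 else 0) = #(s ∩ G.neighborFinset v) := by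
    rw [Finset.sum_boole]
    apply congrArg Finset.card
    ext w
    simp only [Finset.mem_filter, Finset.mem_erase, Finset.mem_inter, mem_neighborFinset]
    constructor
    · rintro ⟨⟨-, hw⟩, h⟩; exact ⟨hw, h⟩
    · rintro ⟨hw, h⟩; exact ⟨⟨h.ne', hw⟩, h⟩
  rw [hsplit, Finset.sum_congr rfl key, Finset.sum_add_distrib, h2, Dsum]
  ring


lemma Dsum_le_of_degenerate (G : SimpleGraph V) [DecidableRel G.Adj] (k : ℕ)
    (hdeg : ∀ t : Finset V, t.Nonempty → ∃ v ∈ t, #(t ∩ G.neighborFinset v) + 2 ≤ k) :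
    ∀ (m : ℕ) (s : Finset V), s.card = m → Dsum G s + 4 * s.card ≤ 2 * k * s.card := by
  intro m
  induction m with
  | zero =>
    intro s hs
    rw [Finset.card_eq_zero] at hs
    subst hs
    simp [Dsum]
  | succ m ih =>
    intro s hs
    obtain ⟨v, hv, hdv⟩ := hdeg s (Finset.card_pos.mp (by omega))
    have hcard : (s.erase v).card = m := by rw [Finset.card_erase_of_mem hv, hs]; omega
    have hE : Dsum G (s.erase v) ≤ Dsum G (s.erase v) := le_refl _
    have hIH := ih (s.erase v) hcard
    rw [Dsum_erase G hv, hs] at *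
    rw [hcard] at hIH
    nlinarith

lemma lemmaE (G : SimpleGraph V) [DecidableRel G.Adj] (n : ℕ) :
    ∀ (m : ℕ) (s : Finset V), s.card = m → n ≤ s.card →
    (∃ t ⊆ s, n ≤ t.card ∧ ∀ v ∈ t, #(t ∩ G.neighborFinset v) + n ≤ t.card) ∨
    ((s.card - n) * (s.card - n + 1) ≤ Dsum G s) := by
  intro m
  induction m using Nat.strong_induction_on with
  | _ m ih =>
    intro s hs hns
    by_cases hgood : ∀ v ∈ s, #(s ∩ G.neighborFinset v) + n ≤ s.card
    · exact Or.inl ⟨s, Finset.Subset.refl s, hns, hgood⟩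
    · push_neg at hgood
      obtain ⟨v, hv, hdv⟩ := hgood
      by_cases hcn : s.card = n
      · right
        rw [hcn, Nat.sub_self]
        simp
      · -- s.card > n
        have hcn' : n + 1 ≤ s.card := by omega
        have hcard : (s.erase v).card = m - 1 := by
          rw [Finset.card_erase_of_mem hv, hs]
        have hm : 1 ≤ m := by omega
        rcases ih (m-1) (by omega) (s.erase v) hcard
            (by rw [Finset.card_erase_of_mem hv]; omega) with h | h
        · exact Or.inl (h.imp fun t ⟨ht, h2⟩ =>
            ⟨ht.trans (Finset.erase_subset v s), h2⟩)
        · right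
          rw [Dsum_erase G hv]
          rw [Finset.card_erase_of_mem hv] at h
          obtain ⟨b, hb⟩ : ∃ b, s.card - n = b + 1 := ⟨s.card - n - 1, by omega⟩
          have h1 : s.card - 1 - n = b := by omega
          have h2 : b + 2 + n ≤ #(s ∩ G.neighborFinset v) + n := by omega
          rw [hb]
          rw [h1] at h
          nlinarith

lemma inter_nbr_compl (F : SimpleGraph V) [DecidableRel F.Adj] [DecidableRel Fᶜ.Adj]
    {t : Finset V} {v : V} (hv : v ∈ t) :
    #(t ∩ F.neighborFinset v) + #(t ∩ Fᶜ.neighborFinset v) + 1 = t.card := by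
  have hdisj : Disjoint (t ∩ F.neighborFinset v) (t ∩ Fᶜ.neighborFinset v) := by
    rw [Finset.disjoint_left]
    intro w hw hw'
    rw [Finset.mem_inter, mem_neighborFinset] at hw hw'
    rw [compl_adj] at hw'
    exact hw'.2.2 hw.2
  have hunion : (t ∩ F.neighborFinset v) ∪ (t ∩ Fᶜ.neighborFinset v) = t.erase v := by
    ext w
    simp only [Finset.mem_union, Finset.mem_inter, mem_neighborFinset, Finset.mem_erase,
      compl_adj]
    constructor
    · rintro (⟨hw, h⟩ | ⟨hw, h⟩)
      · exact ⟨h.ne', hw⟩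
      · exact ⟨fun he => h.1 he.symm, hw⟩
    · rintro ⟨hne, hw⟩
      by_cases h : F.Adj v w
      · exact Or.inl ⟨hw, h⟩
      · exact Or.inr ⟨hw, fun he => hne he.symm, h⟩
  have := Finset.card_union_of_disjoint hdisj
  rw [hunion, Finset.card_erase_of_mem hv] at this
  have : 0 < t.card := Finset.card_pos.mpr ⟨v, hv⟩
  omega

section Tree

variable {α : Type*}

lemma exists_leaf [Fintype α] [DecidableEq α] (T : SimpleGraph α) [DecidableRel T.Adj]
    (htree : T.IsTree) (h2 : 2 ≤ Fintype.card α) :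
    ∃ l p0, T.Adj l p0 ∧ T.neighborFinset l = {p0} := by
  have hpos : ∀ v : α, 0 < T.degree v := by
    intro v
    obtain ⟨u, hu⟩ := Fintype.exists_ne_of_one_lt_card (by omega) v
    obtain ⟨w⟩ := htree.isConnected.preconnected v u
    have hnil : ¬ w.Nil := Walk.not_nil_of_ne (Ne.symm hu)
    rw [T.degree_pos_iff_exists_adj]
    exact ⟨w.getVert 1, Walk.adj_snd hnil⟩
  have hsum : ∑ v, T.degree v = 2 * (Fintype.card α - 1) := by
    rw [T.sum_degrees_eq_twice_card_edges]
    have := htree.card_edgeFinset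
    omega
  by_contra hno
  push_neg at hno
  have hge : ∀ v : α, 2 ≤ T.degree v := by
    intro v
    have h1 := hpos v
    rcases Nat.lt_or_ge (T.degree v) 2 with h | h
    · exfalso
      have hd1 : T.degree v = 1 := by omega
      rw [SimpleGraph.degree, Finset.card_eq_one] at hd1
      obtain ⟨p0, hp0⟩ := hd1
      have hadj : T.Adj v p0 := by
        rw [← mem_neighborFinset, hp0]
        exact Finset.mem_singleton_self p0
      exact hno v p0 hadj hp0
    · exact h
  have : 2 * Fintype.card α ≤ ∑ v, T.degree v := by
    calc 2 * Fintype.card α = ∑ _v : α, 2 := by simp [mul_comm]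
    _ ≤ ∑ v, T.degree v := Finset.sum_le_sum fun v _ => hge v
  omega

lemma reachable_induce_of_support {G : SimpleGraph V} {s : Set V} :
    ∀ {u v : V} (p : G.Walk u v) (_ : ∀ x ∈ p.support, x ∈ s) (hu : u ∈ s) (hv : v ∈ s),
    (G.induce s).Reachable ⟨u, hu⟩ ⟨v, hv⟩ := by
  intro u v p
  induction p with
  | nil => intro _ hu hv; rfl
  | @cons u x v h q ih =>
    intro hsup hu hv
    have hx : x ∈ s := hsup x (by simp [Walk.support_cons])
    have hadj : (G.induce s).Adj ⟨u, hu⟩ ⟨x, hx⟩ := h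
    exact hadj.reachable.trans (ih (fun y hy => hsup y (by simp [Walk.support_cons, hy])) hx hv)

lemma leaf_not_mem_support [Fintype α] [DecidableEq α] {T : SimpleGraph α} [DecidableRel T.Adj]
    {l p0 : α} (hN : T.neighborFinset l = {p0}) {u v : α} (hu : u ≠ l) (hv : v ≠ l)
    (p : T.Walk u v) (hp : p.IsPath) : l ∉ p.support := by
  intro hl
  set p1 := p.takeUntil l hl with hp1
  set p2 := p.dropUntil l hl with hp2
  have hp1path : p1.IsPath := hp.takeUntil hl
  have hp2path : p2.IsPath := hp.dropUntil hl
  have hn1 : ¬ p1.Nil := Walk.not_nil_of_ne hu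
  have hn2 : ¬ p2.Nil := Walk.not_nil_of_ne (Ne.symm hv)
  have hl1 : 1 ≤ p1.length := (Walk.not_nil_iff_lt_length.mp hn1)
  have hl2 : 1 ≤ p2.length := (Walk.not_nil_iff_lt_length.mp hn2)
  set a := p1.reverse.getVert 1 with ha
  set b := p2.getVert 1 with hb
  have hadja : T.Adj l a := Walk.adj_snd (by
    rw [Walk.not_nil_iff_lt_length, Walk.length_reverse]; omega)
  have hadjb : T.Adj l b := Walk.adj_snd hn2
  have hane : a ≠ l := by
    intro he
    have h0 : p1.reverse.getVert 0 = l := Walk.getVert_zero _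
    have := getVert_inj' (hp1path.reverse) (i := 1) (j := 0)
      (by rw [Walk.length_reverse]; omega) (by omega) (by rw [h0, ← ha, he])
    omega
  have hbne : b ≠ l := by
    intro he
    have h0 : p2.getVert 0 = l := Walk.getVert_zero _
    have := getVert_inj' hp2path (i := 1) (j := 0) (by omega) (by omega) (by rw [h0, ← hb, he])
    omega
  have hamem : a ∈ p1.support := by
    have : a ∈ p1.reverse.support := getVert_mem_support' _ (by rw [Walk.length_reverse]; omega)
    rwa [Walk.support_reverse, List.mem_reverse] at this
  have hbmem : b ∈ p2.support.tail := by
    have hmem : b ∈ p2.support := getVert_mem_support' _ (by omega)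
    rw [p2.support_eq_cons, List.mem_cons] at hmem
    exact hmem.resolve_left hbne
  have hnodup : (p1.support ++ p2.support.tail).Nodup := by
    rw [← Walk.support_append, Walk.take_spec p hl]
    exact hp.support_nodup
  have hab : a ≠ b := by
    intro he
    exact (List.disjoint_of_nodup_append hnodup) hamem (he ▸ hbmem)
  have hamem' : a ∈ T.neighborFinset l := by rwa [mem_neighborFinset]
  have hbmem' : b ∈ T.neighborFinset l := by rwa [mem_neighborFinset]
  rw [hN, Finset.mem_singleton] at hamem' hbmem'
  exact hab (hamem'.trans hbmem'.symm)

end Tree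

section Tree2

variable {α : Type*}

lemma isTree_induce [Fintype α] [DecidableEq α] {T : SimpleGraph α} [DecidableRel T.Adj]
    (htree : T.IsTree) {l p0 : α} (hN : T.neighborFinset l = {p0})
    (h2 : 2 ≤ Fintype.card α) : (T.induce {x | x ≠ l}).IsTree := by
  have : Nonempty ({x | x ≠ l} : Set α) := by
    obtain ⟨b, hb⟩ := Fintype.exists_ne_of_one_lt_card (by omega) l
    exact ⟨⟨b, hb⟩⟩
  constructor
  · constructor
    rintro ⟨u, hu⟩ ⟨v, hv⟩
    obtain ⟨w⟩ := htree.isConnected.preconnected u v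
    have hp : w.toPath.1.IsPath := w.toPath.2
    have hns := leaf_not_mem_support hN hu hv w.toPath.1 hp
    exact reachable_induce_of_support w.toPath.1
      (fun x hx => by rintro rfl; exact hns hx) hu hv
  · intro x c hc
    have := hc.map (f := (SimpleGraph.Embedding.induce {x : α | x ≠ l}).toHom)
      Subtype.val_injective
    exact htree.IsAcyclic _ this

end Tree2

universe u

lemma tree_embed [Fintype V] [DecidableEq V] (F : SimpleGraph V) [DecidableRel F.Adj] (n : ℕ)
    (t : Finset V) (htn : n ≤ t.card)
    (hdeg : ∀ v ∈ t, n ≤ #(t ∩ F.neighborFinset v) + 1) :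
    ∀ (m : ℕ), ∀ (α : Type u) [Fintype α] [DecidableEq α], Fintype.card α = m → m ≤ n →
    ∀ (T : SimpleGraph α), T.IsTree →
    ∃ f : α → V, Function.Injective f ∧ (∀ a, f a ∈ t) ∧
      ∀ a b : α, T.Adj a b → F.Adj (f a) (f b) := by
  intro m
  induction m using Nat.strong_induction_on with
  | _ m ih =>
    intro α _ _ hcardα hmn T htree
    haveI : Nonempty α := htree.isConnected.nonempty
    have hm1 : 1 ≤ m := by rw [← hcardα]; exact Fintype.card_pos
    rcases Nat.lt_or_ge m 2 with hm2 | hm2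
    · -- single vertex
      have hsub : Subsingleton α := by
        rw [← Fintype.card_le_one_iff_subsingleton, hcardα]; omega
      obtain ⟨w, hw⟩ : t.Nonempty := Finset.card_pos.mp (by omega)
      refine ⟨fun _ => w, fun a b _ => Subsingleton.elim a b, fun _ => hw, ?_⟩
      intro a b hab
      exact absurd (Subsingleton.elim a b ▸ hab) (T.irrefl)
    · -- at least two vertices
      haveI : DecidableRel T.Adj := Classical.decRel _
      obtain ⟨l, p0, hadj, hN⟩ := exists_leaf T htree (by omega)
      have hTtree' := isTree_induce htree hN (by omega)
      have hcardβ : Fintype.card ({x | x ≠ l} : Set α) = m - 1 := by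
        rw [← hcardα]
        have he : Fintype.card ({x | x ≠ l} : Set α) = Fintype.card {x : α // ¬ x = l} :=
          Fintype.card_congr (Equiv.subtypeEquivRight (by simp))
        rw [he, Fintype.card_subtype_compl (p := fun x => x = l), Fintype.card_subtype_eq]
      obtain ⟨f', hf'inj, hf't, hf'adj⟩ := ih (m - 1) (by omega) ({x | x ≠ l} : Set α)
        hcardβ (by omega) _ hTtree'
      have hp0l : p0 ≠ l := hadj.ne'
      set P := f' ⟨p0, hp0l⟩ with hP
      set A := t ∩ F.neighborFinset P with hA
      set img := (Finset.univ : Finset ({x | x ≠ l} : Set α)).image f' with himg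
      have hPimg : P ∈ img := Finset.mem_image.mpr ⟨⟨p0, hp0l⟩, Finset.mem_univ _, rfl⟩
      have hPA : P ∉ A := by simp [hA]
      have hcardA : n ≤ #A + 1 := hdeg P (hf't _)
      have hcardimg : #img = m - 1 := by
        rw [himg, Finset.card_image_of_injective _ hf'inj, Finset.card_univ, hcardβ]
      have hsub2 : A ∩ img ⊆ img.erase P := by
        intro x hx
        rw [Finset.mem_inter] at hx
        rw [Finset.mem_erase]
        exact ⟨fun he => hPA (he ▸ hx.1), hx.2⟩
      have hAimg : ((A \ img).Nonempty) := by
        rw [← Finset.card_pos]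
        have h1 := Finset.card_sdiff_add_card_inter A img
        have h2 : #(A ∩ img) ≤ #(img.erase P) := Finset.card_le_card hsub2
        rw [Finset.card_erase_of_mem hPimg, hcardimg] at h2
        omega
      obtain ⟨w, hw⟩ := hAimg
      rw [Finset.mem_sdiff] at hw
      have hwA : w ∈ A := hw.1
      have hwimg : w ∉ img := hw.2
      have hwadj : F.Adj P w := by
        have h3 := hwA
        rw [hA, Finset.mem_inter, mem_neighborFinset] at h3
        exact h3.2
      have hwt : w ∈ t := by
        have h3 := hwA; rw [hA, Finset.mem_inter] at h3; exact h3.1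
      have huniq : ∀ b : α, T.Adj l b → b = p0 := by
        intro b hb
        have h3 : b ∈ T.neighborFinset l := by rwa [mem_neighborFinset]
        rwa [hN, Finset.mem_singleton] at h3
      have hwimg' : ∀ x : ({x | x ≠ l} : Set α), f' x ≠ w := by
        intro x he
        exact hwimg (Finset.mem_image.mpr ⟨x, Finset.mem_univ _, he⟩)
      refine ⟨fun a => if h : a = l then w else f' ⟨a, h⟩, ?_, ?_, ?_⟩
      · intro a b hab
        have hab' : (if h : a = l then w else f' ⟨a, h⟩)
            = (if h : b = l then w else f' ⟨b, h⟩) := hab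
        by_cases ha : a = l <;> by_cases hb : b = l
        · rw [ha, hb]
        · rw [dif_pos ha, dif_neg hb] at hab'
          exact absurd hab'.symm (hwimg' _)
        · rw [dif_pos hb, dif_neg ha] at hab'
          exact absurd hab' (hwimg' _)
        · rw [dif_neg ha, dif_neg hb] at hab'
          simpa using congrArg Subtype.val (hf'inj hab')
      · intro a
        show (if h : a = l then w else f' ⟨a, h⟩) ∈ t
        by_cases ha : a = l
        · rw [dif_pos ha]; exact hwt
        · rw [dif_neg ha]; exact hf't _
      · intro a b hab
        show F.Adj (if h : a = l then w else f' ⟨a, h⟩) (if h : b = l then w else f' ⟨b, h⟩)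
        by_cases ha : a = l
        · have hb : b = p0 := huniq b (ha ▸ hab)
          have hbl : ¬ b = l := fun he => hp0l (hb ▸ he)
          rw [dif_pos ha, dif_neg hbl]
          have h4 : f' ⟨b, hbl⟩ = P := by rw [hP]; congr 1; exact Subtype.ext hb
          rw [h4]
          exact hwadj.symm
        · by_cases hb : b = l
          · have ha' : a = p0 := huniq a (hb ▸ hab.symm)
            rw [dif_neg ha, dif_pos hb]
            have h4 : f' ⟨a, ha⟩ = P := by rw [hP]; congr 1; exact Subtype.ext ha'
            rw [h4]
            exact hwadj
          · rw [dif_neg ha, dif_neg hb]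
            exact hf'adj ⟨a, ha⟩ ⟨b, hb⟩ hab

lemma ramsey_step {α : Type u} [Fintype α] (k n N : ℕ) (hk : 3 ≤ k) (hn1 : 1 ≤ n) (hnN : n ≤ N)
    (hnum : 2 * k * N < (N - n) * (N - n + 1) + 4 * N)
    (T : SimpleGraph α) (hcard : Fintype.card α = n) (htree : T.IsTree) :
    RamseyProp N T (pathGraph k) := by
  classical
  intro F
  by_cases hpath : Contains Fᶜ (pathGraph k)
  · exact Or.inr hpath
  left
  have hB : ∀ s : Finset (Fin N), s.Nonempty →
      ∃ v ∈ s, #(s ∩ Fᶜ.neighborFinset v) + 2 ≤ k := by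
    intro s hs
    by_contra hc
    push_neg at hc
    have hdd : ∀ v ∈ s, k ≤ #(s ∩ Fᶜ.neighborFinset v) + 1 := by
      intro v hv; have := hc v hv; omega
    obtain ⟨f, hf⟩ := exists_path_embedding Fᶜ k s hs hdd
    exact hpath ⟨f, hf⟩
  have hcardV : (Finset.univ : Finset (Fin N)).card = N := by simp
  rcases lemmaE Fᶜ n N Finset.univ hcardV (by rw [hcardV]; exact hnN) with h | h
  · obtain ⟨t, hts, htn, hdegG⟩ := h
    have hdegF : ∀ v ∈ t, n ≤ #(t ∩ F.neighborFinset v) + 1 := by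
      intro v hv
      have h1 := inter_nbr_compl F hv
      have h2 := hdegG v hv
      omega
    obtain ⟨f, hfinj, hft, hfadj⟩ := tree_embed F n t htn hdegF n α hcard le_rfl T htree
    exact ⟨⟨f, hfinj⟩, hfadj⟩
  · exfalso
    have h2 := Dsum_le_of_degenerate Fᶜ k hB N Finset.univ hcardV
    rw [hcardV] at h h2
    generalize hq : (N - n) * (N - n + 1) = q at h hnum
    generalize hkn : 2 * k * N = K at h2 hnum
    omega

end Aux

theorem stmt7 {α : Type*} [Fintype α] (k n : ℕ) (hk : 3 ≤ k) (C : ℝ) (hC : 1 < C)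
    (hn : 2 * C * k / (C - 1) ^ 2 ≤ n)
    (T : SimpleGraph α) (hcard : Fintype.card α = n) (htree : T.IsTree) :
    (ramseyNumber T (pathGraph k) : ℝ) ≤ C * n := by
  classical
  haveI : Nonempty α := htree.isConnected.nonempty
  have hn1 : 1 ≤ n := by rw [← hcard]; exact Fintype.card_pos
  have hn0 : (0:ℝ) < n := by exact_mod_cast hn1
  have hC0 : (0:ℝ) < C - 1 := by linarith
  have hC1 : (0:ℝ) < C := by linarith
  have hk3 : (3:ℝ) ≤ k := by exact_mod_cast hk
  have hn' : 2 * C * k ≤ (C - 1) ^ 2 * n := by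
    rw [div_le_iff₀ (by positivity)] at hn
    linarith
  set N := ⌊C * n⌋₊ with hNdef
  have hcn0 : (0:ℝ) ≤ C * n := by positivity
  have hNle : (N:ℝ) ≤ C * n := Nat.floor_le hcn0
  have hNgt : C * n < (N:ℝ) + 1 := Nat.lt_floor_add_one _
  have hnN : n ≤ N := Nat.le_floor (by nlinarith)
  -- key quantity y = (C-1) * n
  have hy6 : (6:ℝ) < (C - 1) * n := by
    have hy0 : (0:ℝ) < (C - 1) * n := mul_pos hC0 hn0
    nlinarith [mul_le_mul_of_nonneg_right hn' (le_of_lt hn0)]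
  have hnum : 2 * k * N < (N - n) * (N - n + 1) + 4 * N := by
    rw [← Nat.cast_lt (α := ℝ)]
    push_cast [Nat.cast_sub hnN]
    set x : ℝ := (N : ℝ) with hx
    set y : ℝ := (C - 1) * n with hydef
    have hd1 : y - 1 ≤ x - n := by
      rw [hydef]; nlinarith
    have hd2 : y ≤ x - n + 1 := by rw [hydef]; nlinarith
    have h1 : (y - 1) * y ≤ (x - n) * (x - n + 1) := by
      apply mul_le_mul hd1 hd2 (by linarith) (by linarith)
    have h2 : 2 * C * (k:ℝ) * n ≤ y * y := by
      rw [hydef]; nlinarith [mul_le_mul_of_nonneg_right hn' (le_of_lt hn0)]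
    have h3 : 2 * (k:ℝ) * x ≤ 2 * (k:ℝ) * (C * n) :=
      mul_le_mul_of_nonneg_left hNle (by linarith)
    have h4 : y < 4 * x := by
      rw [hydef]; nlinarith
    have h5 : 2 * (k:ℝ) * (C * n) = 2 * C * (k:ℝ) * n := by ring
    have h6 : y * y = (y - 1) * y + y := by ring
    linarith
  have hprop := ramsey_step k n N hk hn1 hnN hnum T hcard htree
  have hNpos : 0 < N := by omega
  have hle : ramseyNumber T (pathGraph k) ≤ N := Nat.sInf_le ⟨hNpos, hprop⟩
  calc (ramseyNumber T (pathGraph k) : ℝ) ≤ (N : ℝ) := by exact_mod_cast hle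
    _ ≤ C * n := hNle
end

section
/- For all integers k ≥ 3 and n ≥ 12k, and every tree T on n vertices, r(T, P_k) ≤ (3/2)·n. -/
open SimpleGraph

namespace RamseyAux

open Finset

attribute [local instance] Classical.propDecidable

universe u w

variable {V : Type*}

/-- A path in `G`, as a list of distinct vertices that are successively adjacent. -/
def PList (G : SimpleGraph V) (l : List V) : Prop := l.Chain' G.Adj ∧ l.Nodup

/-- The degree of `v` into the set `S`. -/
noncomputable def degIn (G : SimpleGraph V) (S : Finset V) (v : V) : ℕ :=
  (S.filter (fun u => G.Adj v u)).card

/-- Sum of degrees inside `S` (twice the number of edges inside `S`). -/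
noncomputable def dsum (G : SimpleGraph V) (S : Finset V) : ℕ := ∑ v ∈ S, degIn G S v

theorem plist_take (G : SimpleGraph V) {l : List V} (h : PList G l) (m : ℕ) :
    PList G (l.take m) := ⟨h.1.take m, h.2.sublist (l.take_sublist m)⟩

theorem contains_of_plist (G : SimpleGraph V) {l : List V} (h : PList G l) {k : ℕ}
    (hlen : l.length = k) : Contains G (pathGraph k) := by
  subst hlen
  refine ⟨⟨fun i => l.get i, fun i j hij => ?_⟩, fun a b hab => ?_⟩
  · exact (List.nodup_iff_injective_get.1 h.2) hij
  · rw [pathGraph_adj] at hab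
    have hchain := List.isChain_iff_getElem.1 h.1
    rcases hab with hab | hab
    · have h1 : (a : ℕ) < l.length - 1 := by have := b.2; omega
      have := hchain a (by omega)
      convert this using 2 <;> simp [← hab]
    · have h1 : (b : ℕ) < l.length - 1 := by have := a.2; omega
      have := (hchain b (by omega)).symm
      convert this using 2 <;> simp [← hab]

theorem degIn_lt_card (G : SimpleGraph V) {S : Finset V} {v : V} (hv : v ∈ S) :
    degIn G S v + 1 ≤ S.card := by
  have h1 : S.filter (fun u => G.Adj v u) ⊆ S.erase v := by
    intro u hu
    simp only [Finset.mem_filter] at hu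
    exact Finset.mem_erase.2 ⟨(G.ne_of_adj hu.2).symm, hu.1⟩
  have h2 := Finset.card_le_card h1
  have h3 := Finset.card_erase_of_mem hv
  have h4 : 0 < S.card := Finset.card_pos.2 ⟨v, hv⟩
  unfold degIn
  omega

theorem degIn_erase (G : SimpleGraph V) (S : Finset V) (w v : V) (hvw : v ≠ w) :
    degIn G (S.erase w) v + (if G.Adj v w ∧ w ∈ S then 1 else 0) = degIn G S v := by
  unfold degIn
  rw [Finset.filter_erase]
  by_cases h : G.Adj v w ∧ w ∈ S
  · rw [if_pos h]
    exact Finset.card_erase_add_one (Finset.mem_filter.2 ⟨h.2, h.1⟩)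
  · rw [if_neg h]
    rw [Finset.erase_eq_of_notMem]
    · omega
    · intro hmem
      exact h ⟨(Finset.mem_filter.1 hmem).2, (Finset.mem_filter.1 hmem).1⟩

theorem dsum_erase (G : SimpleGraph V) (S : Finset V) {w : V} (hw : w ∈ S) :
    dsum G (S.erase w) + 2 * degIn G S w = dsum G S := by
  unfold dsum
  have key : ∀ v ∈ S.erase w,
      degIn G (S.erase w) v + (if G.Adj v w ∧ w ∈ S then 1 else 0) = degIn G S v :=
    fun v hv => degIn_erase G S w v (Finset.mem_erase.1 hv).1
  have h1 : ∑ v ∈ S.erase w, degIn G S v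
      = ∑ v ∈ S.erase w, degIn G (S.erase w) v
        + ∑ v ∈ S.erase w, (if G.Adj v w ∧ w ∈ S then 1 else 0) := by
    rw [← Finset.sum_add_distrib]
    exact (Finset.sum_congr rfl key).symm
  have h2 : ∑ v ∈ S.erase w, (if G.Adj v w ∧ w ∈ S then 1 else 0) = degIn G S w := by
    rw [← Finset.card_filter]
    unfold degIn
    congr 1
    ext v
    simp only [Finset.mem_filter, Finset.mem_erase]
    constructor
    · rintro ⟨⟨hvw, hvS⟩, hadj, -⟩
      exact ⟨hvS, hadj.symm⟩
    · rintro ⟨hvS, hadj⟩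
      exact ⟨⟨G.ne_of_adj hadj.symm, hvS⟩, hadj.symm, hw⟩
  have h3 : ∑ v ∈ S.erase w, degIn G S v + degIn G S w = ∑ v ∈ S, degIn G S v :=
    Finset.sum_erase_add S _ hw
  omega



theorem chain'_rotate {r : V → V → Prop} {l : List V} (h : l.Chain' r)
    (hwrap : ∀ a b, l.getLast? = some a → l.head? = some b → r a b) (m : ℕ) (hm : m ≤ l.length) :
    (l.rotate m).Chain' r := by
  rcases Nat.eq_zero_or_pos m with rfl | hm0
  · simpa using h
  rcases Nat.eq_or_lt_of_le hm with rfl | hm'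
  · rw [List.rotate_length]; exact h
  rw [List.rotate_eq_drop_append_take hm]
  apply List.IsChain.append (h.drop m) (h.take m)
  intro x hx y hy
  apply hwrap
  · have hne : l.drop m ≠ [] := by
      intro hnil
      have := List.drop_eq_nil_iff.1 hnil
      omega
    rw [← List.take_append_drop m l, List.getLast?_append_of_ne_nil _ hne]
    exact hx
  · have hne : l.take m ≠ [] := by
      intro hnil
      have : min m l.length = 0 := by rw [← List.length_take, hnil]; rfl
      omega
    rcases l with - | ⟨a, l'⟩
    · simp at hm'
    · rcases Nat.exists_eq_succ_of_ne_zero (Nat.pos_iff_ne_zero.1 hm0) with ⟨m', rfl⟩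
      simp only [List.take_succ_cons, List.head?_cons, Option.mem_def, Option.some.injEq] at hy ⊢
      exact hy

theorem peel (G : SimpleGraph V) [Fintype V] (D : ℕ) (S : Finset V) :
    ∃ U ⊆ S, (∀ v ∈ U, degIn G U v ≤ D) ∧
      dsum G U + 2 * (D + 1) * (S.card - U.card) ≤ dsum G S := by
  induction S using Finset.strongInduction with
  | _ S ih =>
    by_cases hall : ∀ v ∈ S, degIn G S v ≤ D
    · exact ⟨S, Finset.Subset.refl S, hall, by simp⟩
    · push_neg at hall
      obtain ⟨w, hwS, hw⟩ := hall
      obtain ⟨U, hUsub, hUdeg, hUb⟩ := ih (S.erase w) (Finset.erase_ssubset hwS)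
      refine ⟨U, hUsub.trans (Finset.erase_subset w S), hUdeg, ?_⟩
      have h1 := dsum_erase G S hwS
      have hcards : U.card ≤ (S.erase w).card := Finset.card_le_card hUsub
      have h2 := Finset.card_erase_of_mem hwS
      have h3 : 0 < S.card := Finset.card_pos.2 ⟨w, hwS⟩
      have e1 : S.card - U.card = ((S.erase w).card - U.card) + 1 := by omega
      calc dsum G U + 2*(D+1)*(S.card - U.card)
          = (dsum G U + 2*(D+1)*((S.erase w).card - U.card)) + 2*(D+1) := by rw [e1]; ring
        _ ≤ dsum G (S.erase w) + 2*degIn G S w := Nat.add_le_add hUb (by omega)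
        _ = dsum G S := h1

theorem interior_two {G : SimpleGraph V} {x : V} :
    ∀ {u v : V} (w : G.Walk u v), w.IsPath → x ∈ w.support → x ≠ u → x ≠ v →
    ∃ y z, y ≠ z ∧ G.Adj x y ∧ G.Adj x z := by
  intro u v w
  induction w with
  | nil =>
    intro _ hx hxu _
    rw [SimpleGraph.Walk.support_nil] at hx
    exact absurd (List.mem_singleton.1 hx) hxu
  | @cons a b c h p ih =>
    intro hp hx hxu hxv
    rw [SimpleGraph.Walk.support_cons] at hx
    have hxw : x ∈ p.support := by
      rcases List.mem_cons.1 hx with rfl | h2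
      · exact absurd rfl hxu
      · exact h2
    by_cases hxb : x = b
    · subst hxb
      cases p with
      | nil => exact absurd rfl hxv
      | @cons b d c h2 p2 =>
        refine ⟨a, d, ?_, h.symm, h2⟩
        rintro rfl
        have : a ∈ (SimpleGraph.Walk.cons h2 p2).support := by
          rw [SimpleGraph.Walk.support_cons]
          exact List.mem_cons_of_mem _ p2.start_mem_support
        exact ((SimpleGraph.Walk.cons_isPath_iff h _).1 hp).2 this
    · exact ih ((SimpleGraph.Walk.cons_isPath_iff h p).1 hp).1 hxw hxb hxv

theorem reach_induce {G : SimpleGraph V} {s : Set V} :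
    ∀ {u v : V} (w : G.Walk u v) (hu : u ∈ s) (hv : v ∈ s),
    (∀ y ∈ w.support, y ∈ s) → (G.induce s).Reachable ⟨u, hu⟩ ⟨v, hv⟩ := by
  intro u v w
  induction w with
  | nil => intro hu hv _; exact Reachable.refl _
  | @cons a b c h p ih =>
    intro hu hv hw
    have hb : b ∈ s := hw b (by
      rw [SimpleGraph.Walk.support_cons]
      exact List.mem_cons_of_mem _ p.start_mem_support)
    have h1 : (G.induce s).Adj ⟨a, hu⟩ ⟨b, hb⟩ := by
      rw [SimpleGraph.comap_adj]
      exact h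
    exact (h1.reachable).trans (ih hb hv (fun y hy => hw y (by
      rw [SimpleGraph.Walk.support_cons]
      exact List.mem_cons_of_mem _ hy)))

theorem crossing {r : V → V → Prop} {P : V → Prop} : ∀ {u v : V},
    Relation.ReflTransGen r u v → ¬ P u → P v → ∃ x y, r x y ∧ ¬ P x ∧ P y := by
  intro u v h
  induction h using Relation.ReflTransGen.head_induction_on with
  | refl => intro h1 h2; exact absurd h2 h1
  | @head a b hab _ ih =>
    intro ha hv
    by_cases hb : P b
    · exact ⟨_, _, hab, ha, hb⟩
    · exact ih hb hv

theorem idx_ne_zero (G : SimpleGraph V) (A : Finset V) {l : List V} (hne : l ≠ [])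
    (hlpos : 0 < l.length)
    (hext0 : ∀ u ∈ A, G.Adj u (l.head hne) → u ∈ l) {u : V} (huA : u ∈ A)
    (hadj : G.Adj (l.head hne) u) : l.idxOf u ≠ 0 := by
  intro h0
  have hul : u ∈ l := hext0 u huA hadj.symm
  have hidx : l.idxOf u < l.length := List.idxOf_lt_length_iff.2 hul
  have hget : l.get ⟨l.idxOf u, hidx⟩ = u := List.idxOf_get _
  apply G.ne_of_adj hadj
  rw [← hget]
  simp only [h0]
  rw [← List.get_mk_zero hlpos]

theorem exists_long_plist (G : SimpleGraph V) [Fintype V] {k : ℕ} (hk : 3 ≤ k) (A : Finset V)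
    (hconn : ∀ u ∈ A, ∀ v ∈ A,
      Relation.ReflTransGen (fun x y => x ∈ A ∧ y ∈ A ∧ G.Adj x y) u v)
    (hdeg : ∀ v ∈ A, k ≤ 2 * degIn G A v + 1)
    (hcard : k ≤ A.card) :
    ∃ l, PList G l ∧ (∀ x ∈ l, x ∈ A) ∧ k ≤ l.length := by
  set L : Set (List V) := {l | PList G l ∧ (∀ x ∈ l, x ∈ A) ∧ l ≠ []} with hL
  have hLfin : L.Finite :=
    (List.finite_length_le V (Fintype.card V)).subset (fun l hl => hl.1.2.length_le_card)
  have hAne : A.Nonempty := Finset.card_pos.1 (by omega)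
  obtain ⟨w0, hw0⟩ := hAne
  have hLne : L.Nonempty :=
    ⟨[w0], ⟨List.isChain_singleton _, List.nodup_singleton _⟩, by simpa using hw0, by simp⟩
  obtain ⟨l, hlL, hlmax⟩ := Set.Finite.exists_maximalFor List.length L hLfin hLne
  have hmax : ∀ l' ∈ L, l'.length ≤ l.length := by
    intro l' hl'
    by_contra hlen
    push_neg at hlen
    have := hlmax hl' hlen.le
    omega
  obtain ⟨⟨hchain, hnodup⟩, hmem, hne⟩ := hlL
  by_cases hlong : k ≤ l.length
  · exact ⟨l, ⟨hchain, hnodup⟩, hmem, hlong⟩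
  push_neg at hlong
  exfalso
  have hlpos : 0 < l.length := List.length_pos_iff.2 hne
  set t := l.length - 1 with ht
  set v₀ := l.head hne with hv₀
  set vt := l.getLast hne with hvt
  have hv₀l : v₀ ∈ l := List.head_mem hne
  have hvtl : vt ∈ l := List.getLast_mem hne
  have hv₀A : v₀ ∈ A := hmem _ hv₀l
  have hvtA : vt ∈ A := hmem _ hvtl
  -- non-extendability at the head
  have hext0 : ∀ u ∈ A, G.Adj u v₀ → u ∈ l := by
    intro u huA hadj
    by_contra hul
    have hLmem : (u :: l) ∈ L := by
      refine ⟨⟨hchain.cons ?_, List.nodup_cons.2 ⟨hul, hnodup⟩⟩, ?_, by simp⟩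
      · intro b hb
        rw [List.head?_eq_head hne] at hb
        obtain rfl : v₀ = b := Option.some.inj hb
        exact hadj
      · intro x hx
        rcases List.mem_cons.1 hx with rfl | hx
        · exact huA
        · exact hmem x hx
    have := hmax _ hLmem
    simp at this
  -- non-extendability at the end
  have hextt : ∀ u ∈ A, G.Adj vt u → u ∈ l := by
    intro u huA hadj
    by_contra hul
    have hLmem : (l ++ [u]) ∈ L := by
      refine ⟨⟨List.IsChain.append hchain (List.isChain_singleton _) ?_,
        List.nodup_append.2 ⟨hnodup, List.nodup_singleton _, by intro a ha b hb hab; simp at hb; subst hb; subst hab; exact hul ha⟩⟩, ?_, by simp⟩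
      · intro x hx y hy
        rw [List.getLast?_eq_getLast hne] at hx
        obtain rfl : vt = x := Option.some.inj hx
        obtain rfl : u = y := Option.some.inj hy
        exact hadj
      · intro x hx
        rcases List.mem_append.1 hx with hx | hx
        · exact hmem x hx
        · rcases List.mem_singleton.1 hx with rfl
          exact huA
    have := hmax _ hLmem
    simp at this
  -- index sets
  set S₁ : Finset ℕ :=
    (Finset.range t).filter (fun i => ∃ h : i + 1 < l.length, G.Adj v₀ (l.get ⟨i+1, h⟩)) with hS₁
  set S₂ : Finset ℕ :=
    (Finset.range t).filter (fun i => ∃ h : i < l.length, G.Adj vt (l.get ⟨i, h⟩)) with hS₂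
  have hdeg1 : degIn G A v₀ ≤ S₁.card := by
    apply Finset.card_le_card_of_injOn (fun u => l.idxOf u - 1)
    · intro u hu
      simp only [degIn, Finset.mem_coe, Finset.mem_filter] at hu
      obtain ⟨huA, hadj⟩ := hu
      have hul : u ∈ l := hext0 u huA hadj.symm
      have hidx : l.idxOf u < l.length := List.idxOf_lt_length_iff.2 hul
      have hget : l.get ⟨l.idxOf u, hidx⟩ = u := List.idxOf_get _
      have hne0 : l.idxOf u ≠ 0 := by
        intro h0
        apply G.ne_of_adj hadj
        rw [← hget]
        simp only [h0]
        rw [hv₀, ← List.get_mk_zero hlpos]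
      simp only [hS₁, Finset.mem_coe, Finset.mem_filter, Finset.mem_range]
      refine ⟨by omega, by omega, ?_⟩
      have : (⟨l.idxOf u - 1 + 1, by omega⟩ : Fin l.length) = ⟨l.idxOf u, hidx⟩ :=
        Fin.ext (by simp; omega)
      rw [this, hget]
      exact hadj
    · intro u hu u' hu' heq
      simp only [Finset.coe_filter, Set.mem_setOf_eq] at hu hu'
      have hul : u ∈ l := hext0 u hu.1 hu.2.symm
      have hul' : u' ∈ l := hext0 u' hu'.1 hu'.2.symm
      have hne0 : l.idxOf u ≠ 0 := idx_ne_zero G A hne hlpos hext0 hu.1 hu.2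
      have hne0' : l.idxOf u' ≠ 0 := idx_ne_zero G A hne hlpos hext0 hu'.1 hu'.2
      have heq' : l.idxOf u - 1 = l.idxOf u' - 1 := heq
      exact (List.idxOf_inj hul).1 (by omega)
  have hdeg2 : degIn G A vt ≤ S₂.card := by
    apply Finset.card_le_card_of_injOn (fun u => l.idxOf u)
    · intro u hu
      simp only [degIn, Finset.mem_coe, Finset.mem_filter] at hu
      obtain ⟨huA, hadj⟩ := hu
      have hul : u ∈ l := hextt u huA hadj
      have hidx : l.idxOf u < l.length := List.idxOf_lt_length_iff.2 hul
      have hget : l.get ⟨l.idxOf u, hidx⟩ = u := List.idxOf_get _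
      have hnet : l.idxOf u ≠ l.length - 1 := by
        intro h0
        apply G.ne_of_adj hadj
        rw [← hget]
        rw [hvt, List.getLast_eq_getElem]
        simp only [h0]
        rfl
      simp only [hS₂, Finset.mem_coe, Finset.mem_filter, Finset.mem_range]
      exact ⟨by omega, hidx, by rw [hget]; exact hadj⟩
    · intro u hu u' hu' heq
      simp only [Finset.coe_filter, Set.mem_setOf_eq] at hu hu'
      have heq' : l.idxOf u = l.idxOf u' := heq
      exact (List.idxOf_inj (hextt u hu.1 hu.2)).1 heq' 
  -- pigeonhole
  have hunion : S₁ ∪ S₂ ⊆ Finset.range t := by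
    intro i hi
    rcases Finset.mem_union.1 hi with hi | hi
    · exact (Finset.mem_filter.1 hi).1
    · exact (Finset.mem_filter.1 hi).1
  have hcardu : (S₁ ∪ S₂).card ≤ t := by
    simpa using Finset.card_le_card hunion
  have hinter : 0 < (S₁ ∩ S₂).card := by
    have h1 := hdeg v₀ hv₀A
    have h2 := hdeg vt hvtA
    have := Finset.card_union_add_card_inter S₁ S₂
    omega
  obtain ⟨i, hi⟩ := Finset.card_pos.1 hinter
  obtain ⟨hiS₁, hiS₂⟩ := Finset.mem_inter.1 hi
  obtain ⟨hit, hi1lt, hadj1⟩ : i < t ∧ ∃ h : i + 1 < l.length, G.Adj v₀ (l.get ⟨i+1, h⟩) := by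
    have := Finset.mem_filter.1 hiS₁
    exact ⟨Finset.mem_range.1 this.1, this.2⟩
  obtain ⟨-, hi2lt, hadj2⟩ : i < t ∧ ∃ h : i < l.length, G.Adj vt (l.get ⟨i, h⟩) := by
    have := Finset.mem_filter.1 hiS₂
    exact ⟨Finset.mem_range.1 this.1, this.2⟩
  -- the cycle σ
  set σ := l.take (i+1) ++ (l.drop (i+1)).reverse with hσ
  have htake_ne : l.take (i+1) ≠ [] := by
    intro h0
    have : min (i+1) l.length = 0 := by rw [← List.length_take, h0]; rfl
    omega
  have hdrop_ne : l.drop (i+1) ≠ [] := by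
    intro h0
    have := List.drop_eq_nil_iff.1 h0
    omega
  have hperm : σ.Perm l := by
    have h1 : σ.Perm (l.take (i+1) ++ l.drop (i+1)) :=
      List.Perm.append_left _ (List.reverse_perm _)
    rwa [List.take_append_drop] at h1
  have hσnodup : σ.Nodup := hperm.nodup_iff.2 hnodup
  have hσlen : σ.length = l.length := hperm.length_eq
  have hσne : σ ≠ [] := by
    intro h0
    rw [h0] at hσlen
    simp at hσlen
    omega
  have hσhead : σ.head? = some v₀ := by
    rw [hσ, List.head?_append_of_ne_nil _ htake_ne]
    rcases l with - | ⟨a, l'⟩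
    · simp at hlpos
    · simp [List.take_succ_cons, hv₀]
  have hσlast : σ.getLast? = some (l.get ⟨i+1, hi1lt⟩) := by
    rw [hσ, List.getLast?_append_of_ne_nil _ (by simpa using hdrop_ne)]
    rw [List.getLast?_reverse, List.head?_drop]
    exact List.getElem?_eq_getElem hi1lt
  have hσchain : σ.Chain' G.Adj := by
    rw [hσ]
    apply List.IsChain.append (hchain.take _)
    · rw [List.isChain_reverse]
      exact (hchain.drop _).imp (fun a b h => h.symm)
    · intro x hx y hy
      rw [List.getLast?_eq_getLast htake_ne, Option.mem_def, Option.some.injEq] at hx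
      rw [List.head?_reverse, List.getLast?_eq_getLast hdrop_ne, Option.mem_def,
        Option.some.injEq] at hy
      obtain rfl := hx
      obtain rfl := hy
      have h1 : (l.take (i+1)).getLast htake_ne = l.get ⟨i, hi2lt⟩ := by
        rw [List.getLast_eq_getElem]
        have hlen : (l.take (i+1)).length = i + 1 := by rw [List.length_take]; omega
        simp only [hlen, Nat.add_sub_cancel, List.getElem_take]
        rfl
      have h2 : (l.drop (i+1)).getLast hdrop_ne = vt := List.getLast_drop _
      rw [h1, h2]
      exact hadj2.symm
  have hwrapσ : ∀ a b, σ.getLast? = some a → σ.head? = some b → G.Adj a b := by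
    intro a b ha hb
    rw [hσlast, Option.some.injEq] at ha
    rw [hσhead, Option.some.injEq] at hb
    subst ha; subst hb
    exact hadj1.symm
  have hout : ∃ u ∈ A, u ∉ σ := by
    by_contra hconta
    push_neg at hconta
    have hsub : A ⊆ σ.toFinset := fun u hu => List.mem_toFinset.2 (hconta u hu)
    have hc1 := Finset.card_le_card hsub
    have hc2 : σ.toFinset.card ≤ σ.length := σ.toFinset_card_le
    omega
  obtain ⟨u, huA, huσ⟩ := hout
  have hv₀σ : v₀ ∈ σ := hperm.mem_iff.2 hv₀l
  obtain ⟨x, y, ⟨hxA, hyA, hxy⟩, hxσ, hyσ⟩ :=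
    crossing (P := fun z => z ∈ σ) (hconn u huA v₀ hv₀A) huσ hv₀σ
  set m := σ.idxOf y with hm
  have hmlt : m < σ.length := List.idxOf_lt_length_iff.2 hyσ
  set ρ := σ.rotate m with hρ
  have hρchain : ρ.Chain' G.Adj := chain'_rotate hσchain hwrapσ m hmlt.le
  have hρperm : ρ.Perm σ := σ.rotate_perm m
  have hρnodup : ρ.Nodup := hρperm.nodup_iff.2 hσnodup
  have hρhead : ρ.head? = some y := by
    have hdne : σ.drop m ≠ [] := by
      intro h0
      have := List.drop_eq_nil_iff.1 h0
      omega
    rw [hρ, List.rotate_eq_drop_append_take hmlt.le, List.head?_append_of_ne_nil _ hdne,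
      List.head?_drop, List.getElem?_eq_getElem hmlt]
    exact congrArg some (List.idxOf_get _)
  have hfinal : (x :: ρ) ∈ L := by
    refine ⟨⟨hρchain.cons ?_,
      List.nodup_cons.2 ⟨fun hc => hxσ (hρperm.mem_iff.1 hc), hρnodup⟩⟩, ?_, by simp⟩
    · intro b hb
      rw [hρhead, Option.mem_def, Option.some.injEq] at hb
      obtain rfl := hb
      exact hxy
    · intro z hz
      rcases List.mem_cons.1 hz with rfl | hz
      · exact hxA
      · exact hmem z (hperm.mem_iff.1 (hρperm.mem_iff.1 hz))
  have hcontra := hmax _ hfinal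
  have hρlen : ρ.length = l.length := by rw [hρ, List.length_rotate, hσlen]
  rw [List.length_cons, hρlen] at hcontra
  omega

theorem dsum_split (G : SimpleGraph V) (S A : Finset V) (hA : A ⊆ S)
    (hcross : ∀ x ∈ A, ∀ y ∈ S \ A, ¬ G.Adj x y) :
    dsum G S = dsum G A + dsum G (S \ A) := by
  unfold dsum
  have hsub : S = A ∪ (S \ A) := by rw [Finset.union_sdiff_of_subset hA]
  have hdisj : Disjoint A (S \ A) := Finset.disjoint_sdiff
  have hdegA : ∀ v ∈ A, degIn G S v = degIn G A v := by
    intro v hv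
    unfold degIn
    congr 1
    apply Finset.Subset.antisymm
    · intro u hu
      simp only [Finset.mem_filter] at hu ⊢
      refine ⟨?_, hu.2⟩
      by_contra huA
      exact hcross v hv u (Finset.mem_sdiff.2 ⟨hu.1, huA⟩) hu.2
    · intro u hu
      simp only [Finset.mem_filter] at hu ⊢
      exact ⟨hA hu.1, hu.2⟩
  have hdegB : ∀ v ∈ S \ A, degIn G S v = degIn G (S \ A) v := by
    intro v hv
    unfold degIn
    congr 1
    apply Finset.Subset.antisymm
    · intro u hu
      simp only [Finset.mem_filter] at hu ⊢
      refine ⟨Finset.mem_sdiff.2 ⟨hu.1, ?_⟩, hu.2⟩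
      intro huA
      exact hcross u huA v hv hu.2.symm
    · intro u hu
      simp only [Finset.mem_filter, Finset.mem_sdiff] at hu ⊢
      exact ⟨hu.1.1, hu.2⟩
  calc ∑ v ∈ S, degIn G S v = ∑ v ∈ A ∪ (S \ A), degIn G S v := by rw [← hsub]
    _ = ∑ v ∈ A, degIn G S v + ∑ v ∈ S \ A, degIn G S v := Finset.sum_union hdisj
    _ = ∑ v ∈ A, degIn G A v + ∑ v ∈ S \ A, degIn G (S \ A) v := by
        rw [Finset.sum_congr rfl hdegA, Finset.sum_congr rfl hdegB]

theorem erdos_gallai (G : SimpleGraph V) [Fintype V] {k : ℕ} (hk : 3 ≤ k) (S : Finset V)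
    (hno : ∀ l, PList G l → (∀ x ∈ l, x ∈ S) → l.length < k) :
    dsum G S ≤ (k - 2) * S.card := by
  induction S using Finset.strongInduction with
  | _ S ih =>
  by_cases hlow : ∃ w ∈ S, 2 * degIn G S w + 2 ≤ k
  · obtain ⟨w, hwS, hw⟩ := hlow
    have hih := ih (S.erase w) (Finset.erase_ssubset hwS)
      (fun l hl hmem => hno l hl (fun x hx => Finset.erase_subset w S (hmem x hx)))
    have h1 := dsum_erase G S hwS
    have h2 := Finset.card_erase_of_mem hwS
    have h3 : 0 < S.card := Finset.card_pos.2 ⟨w, hwS⟩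
    have h5 : (k-2) * (S.erase w).card + (k-2) = (k-2) * S.card := by
      obtain ⟨c, hc⟩ : ∃ c, S.card = c + 1 := ⟨S.card - 1, by omega⟩
      rw [h2, hc]
      simp [Nat.mul_succ]
    calc dsum G S = dsum G (S.erase w) + 2*degIn G S w := h1.symm
      _ ≤ (k-2)*(S.erase w).card + (k-2) := Nat.add_le_add hih (by omega)
      _ = (k-2)*S.card := h5
  · push_neg at hlow
    by_cases hsmall : S.card < k
    · have h1 : ∀ v ∈ S, degIn G S v ≤ k - 2 :=
        fun v hv => by have := degIn_lt_card G hv; omega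
      calc dsum G S ≤ ∑ _v ∈ S, (k-2) := Finset.sum_le_sum h1
        _ = S.card * (k-2) := by rw [Finset.sum_const, smul_eq_mul]
        _ = (k-2) * S.card := Nat.mul_comm _ _
    · push_neg at hsmall
      by_cases hconn : ∀ u ∈ S, ∀ v ∈ S,
          Relation.ReflTransGen (fun x y => x ∈ S ∧ y ∈ S ∧ G.Adj x y) u v
      · exfalso
        obtain ⟨l, hpl, hmem, hlen⟩ := exists_long_plist G hk S hconn
          (fun v hv => by have := hlow v hv; omega) hsmall
        exact absurd (hno l hpl hmem) (by omega)
      · push_neg at hconn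
        obtain ⟨u, huS, v, hvS, huv⟩ := hconn
        set r := fun x y => x ∈ S ∧ y ∈ S ∧ G.Adj x y with hr
        set A := S.filter (fun x => Relation.ReflTransGen r u x) with hA
        have huA : u ∈ A := Finset.mem_filter.2 ⟨huS, Relation.ReflTransGen.refl⟩
        have hvB : v ∈ S \ A :=
          Finset.mem_sdiff.2 ⟨hvS, fun hvA => huv (Finset.mem_filter.1 hvA).2⟩
        have hAsub : A ⊆ S := Finset.filter_subset _ _
        have hcross : ∀ x ∈ A, ∀ y ∈ S \ A, ¬ G.Adj x y := by
          intro x hx y hy hadj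
          obtain ⟨hxS, hrx⟩ := Finset.mem_filter.1 hx
          obtain ⟨hyS, hyA⟩ := Finset.mem_sdiff.1 hy
          exact hyA (Finset.mem_filter.2 ⟨hyS, hrx.tail ⟨hxS, hyS, hadj⟩⟩)
        have hsplit := dsum_split G S A hAsub hcross
        have hA_ssub : A ⊂ S :=
          (Finset.ssubset_iff_of_subset hAsub).2 ⟨v, hvS, (Finset.mem_sdiff.1 hvB).2⟩
        have hB_ssub : S \ A ⊂ S := Finset.sdiff_ssubset hAsub ⟨u, huA⟩
        have ihA := ih A hA_ssub
          (fun l hl hmem => hno l hl (fun x hx => hAsub (hmem x hx)))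
        have ihB := ih (S \ A) hB_ssub
          (fun l hl hmem => hno l hl (fun x hx => (Finset.sdiff_subset) (hmem x hx)))
        have hcards : A.card + (S \ A).card = S.card := by
          have := Finset.card_sdiff_add_card_eq_card hAsub
          omega
        calc dsum G S = dsum G A + dsum G (S\A) := hsplit
          _ ≤ (k-2)*A.card + (k-2)*(S\A).card := Nat.add_le_add ihA ihB
          _ = (k-2)*S.card := by rw [← Nat.mul_add, hcards]

theorem tree_embed : ∀ (n : ℕ) {α : Type u} [Fintype α] (T : SimpleGraph α), T.IsTree →
    Fintype.card α = n → ∀ {W : Type w} (F : SimpleGraph W) (U : Finset W),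
    (∀ v ∈ U, n ≤ degIn F U v + 1) → n ≤ U.card →
    ∃ f : α ↪ W, (∀ a, f a ∈ U) ∧ ∀ a b, T.Adj a b → F.Adj (f a) (f b) := by
  intro n
  induction n using Nat.strong_induction_on with
  | _ n ih =>
  intro α _ T htree hcard W F U hdeg hUcard
  have hne : Nonempty α := htree.isConnected.nonempty
  have hnpos : 0 < n := by rw [← hcard]; exact Fintype.card_pos
  rcases Nat.lt_or_ge n 2 with hn1 | hn2
  · -- n = 1
    obtain ⟨u0, hu0⟩ : U.Nonempty := Finset.card_pos.1 (by omega)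
    have hsub : Subsingleton α := by
      rw [← Fintype.card_le_one_iff_subsingleton, hcard]; omega
    refine ⟨⟨fun _ => u0, fun a b _ => Subsingleton.elim a b⟩, fun _ => hu0, fun a b hab => ?_⟩
    have hab' : a = b := Subsingleton.elim a b
    subst hab'
    exact (T.irrefl hab).elim
  · -- find a leaf x
    have hsumdeg : ∑ v, T.degree v = 2 * (n - 1) := by
      rw [SimpleGraph.sum_degrees_eq_twice_card_edges]
      have := htree.card_edgeFinset
      omega
    have hleaf : ∃ x, T.degree x ≤ 1 := by
      by_contra hc
      push_neg at hc
      have h2n : 2 * n ≤ ∑ v, T.degree v := by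
        calc 2*n = ∑ _v : α, 2 := by
              rw [Finset.sum_const, Finset.card_univ, hcard, smul_eq_mul]; ring
          _ ≤ _ := Finset.sum_le_sum (fun v _ => hc v)
      omega
    obtain ⟨x, hx⟩ := hleaf
    obtain ⟨y, hyx⟩ := Fintype.exists_ne_of_one_lt_card (by omega) x
    obtain ⟨w0⟩ := htree.isConnected.preconnected x y
    have hp : ∃ p0, T.Adj x p0 := by
      cases w0 with
      | nil => exact absurd rfl hyx
      | cons h _ => exact ⟨_, h⟩
    obtain ⟨p0, hp0⟩ := hp
    have hdegnf : T.degree x = (T.neighborFinset x).card := rfl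
    have huniq : ∀ b, T.Adj x b → b = p0 := by
      intro b hb
      exact Finset.card_le_one.1 (by omega) b ((T.mem_neighborFinset x b).2 hb) p0
        ((T.mem_neighborFinset x p0).2 hp0)
    set s : Set α := {y | y ≠ x} with hs
    set T' : SimpleGraph s := T.induce s with hT'
    have hcard' : Fintype.card s = n - 1 := by
      have h1 : Fintype.card s = Fintype.card {y : α // y ≠ x} :=
        Fintype.card_congr (Equiv.refl _)
      rw [h1, Fintype.card_subtype_compl (p := fun y => y = x), Fintype.card_subtype_eq, hcard]
    have havoid : ∀ (a b : α), a ≠ x → b ≠ x → ∃ w : T.Walk a b, ∀ z ∈ w.support, z ∈ s := by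
      intro a b ha hb
      obtain ⟨w1⟩ := htree.isConnected.preconnected a b
      obtain ⟨w, hwp⟩ : ∃ w : T.Walk a b, w.IsPath := ⟨w1.toPath.1, w1.toPath.2⟩
      refine ⟨w, fun z hz hzx => ?_⟩
      rw [hzx] at hz
      obtain ⟨y1, z1, hyz, h1, h2⟩ :=
        interior_two w hwp hz (fun h => ha h.symm) (fun h => hb h.symm)
      have : 2 ≤ T.degree x := by
        rw [hdegnf]
        exact Finset.one_lt_card.2
          ⟨y1, (T.mem_neighborFinset x y1).2 h1, z1, (T.mem_neighborFinset x z1).2 h2, hyz⟩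
      omega
    have hp0s : p0 ∈ s := fun h => (T.ne_of_adj hp0) h.symm
    have hconn' : T'.Connected := by
      rw [connected_iff]
      refine ⟨fun a b => ?_, ⟨⟨p0, hp0s⟩⟩⟩
      obtain ⟨a, ha⟩ := a
      obtain ⟨b, hb⟩ := b
      obtain ⟨w, hws⟩ := havoid a b ha hb
      exact reach_induce w ha hb hws
    have hacyc' : T'.IsAcyclic := by
      intro v c hc
      exact htree.2 (c.map (SimpleGraph.Embedding.induce (G := T) s).toHom)
        (hc.map (SimpleGraph.Embedding.induce (G := T) s).injective)
    have htree' : T'.IsTree := ⟨hconn', hacyc'⟩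
    obtain ⟨f', hf'U, hf'adj⟩ := ih (n-1) (by omega) T' htree' hcard' F U
      (fun v hv => by have := hdeg v hv; omega) (by omega)
    set fp := f' ⟨p0, hp0s⟩ with hfp
    set img : Finset W := Finset.univ.image f' with himg
    have himgcard : img.card = n - 1 := by
      rw [himg, Finset.card_image_of_injective _ f'.injective, Finset.card_univ, hcard']
    have hfpimg : fp ∈ img := Finset.mem_image.2 ⟨_, Finset.mem_univ _, rfl⟩
    have hfpU : fp ∈ U := hf'U _
    have hbig : 0 < ((U.filter (fun u => F.Adj fp u)) \ img).card := by
      have h1 : n ≤ degIn F U fp + 1 := hdeg fp hfpU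
      have hsub : (U.filter (fun u => F.Adj fp u)) ∩ img ⊆ img.erase fp := by
        intro z hz
        obtain ⟨hz1, hz2⟩ := Finset.mem_inter.1 hz
        refine Finset.mem_erase.2 ⟨fun h0 => ?_, hz2⟩
        subst h0
        exact F.irrefl (Finset.mem_filter.1 hz1).2
      have h2 : ((U.filter (fun u => F.Adj fp u)) ∩ img).card ≤ img.card - 1 := by
        calc ((U.filter (fun u => F.Adj fp u)) ∩ img).card ≤ (img.erase fp).card :=
              Finset.card_le_card hsub
          _ = img.card - 1 := Finset.card_erase_of_mem hfpimg
      have h3 := Finset.card_sdiff_add_card_inter (U.filter (fun u => F.Adj fp u)) img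
      have h4 : (U.filter (fun u => F.Adj fp u)).card = degIn F U fp := rfl
      have h5 : 0 < img.card := Finset.card_pos.2 ⟨fp, hfpimg⟩
      omega
    obtain ⟨u0, hu0⟩ := Finset.card_pos.1 hbig
    obtain ⟨hu0f, hu0img⟩ := Finset.mem_sdiff.1 hu0
    obtain ⟨hu0U, hu0adj⟩ := Finset.mem_filter.1 hu0f
    have hinj : Function.Injective (fun a : α => if h : a = x then u0 else f' ⟨a, h⟩) := by
      intro a b hab
      simp only [] at hab
      by_cases ha : a = x <;> by_cases hb : b = x
      · rw [ha, hb]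
      · rw [dif_pos ha, dif_neg hb] at hab
        exact absurd (Finset.mem_image.2 ⟨⟨b, hb⟩, Finset.mem_univ _, hab.symm⟩) hu0img
      · rw [dif_neg ha, dif_pos hb] at hab
        exact absurd (Finset.mem_image.2 ⟨⟨a, ha⟩, Finset.mem_univ _, hab⟩) hu0img
      · rw [dif_neg ha, dif_neg hb] at hab
        have h1 := f'.injective hab
        have h2 : a = b := congrArg Subtype.val h1
        exact h2
    refine ⟨⟨_, hinj⟩, fun a => ?_, fun a b hab => ?_⟩
    · by_cases ha : a = x
      · simpa [dif_pos ha] using hu0U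
      · simpa [dif_neg ha] using hf'U ⟨a, ha⟩
    · simp only [Function.Embedding.coeFn_mk]
      by_cases ha : a = x <;> by_cases hb : b = x
      · subst ha; subst hb; exact (T.irrefl hab).elim
      · subst ha
        have hbp : b = p0 := huniq b hab
        rw [dif_pos rfl, dif_neg hb]
        have : f' ⟨b, hb⟩ = fp := by rw [hfp]; congr 1; exact Subtype.ext hbp
        rw [this]
        exact hu0adj.symm
      · subst hb
        have hap : a = p0 := huniq a hab.symm
        rw [dif_pos rfl, dif_neg ha]
        have : f' ⟨a, ha⟩ = fp := by rw [hfp]; congr 1; exact Subtype.ext hap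
        rw [this]
        exact hu0adj
      · rw [dif_neg ha, dif_neg hb]
        apply hf'adj
        rw [hT']
        exact hab


theorem degIn_compl (F : SimpleGraph V) (U : Finset V) {v : V} (hv : v ∈ U) :
    degIn F U v + degIn Fᶜ U v + 1 = U.card := by
  have h3 : ((U.erase v).filter (fun u => F.Adj v u)).card
      + ((U.erase v).filter (fun u => ¬ F.Adj v u)).card = (U.erase v).card :=
    Finset.card_filter_add_card_filter_not (fun u => F.Adj v u)
  have h1 : degIn Fᶜ U v = ((U.erase v).filter (fun u => ¬ F.Adj v u)).card := by
    unfold degIn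
    congr 1
    ext u
    simp only [Finset.mem_filter, Finset.mem_erase, compl_adj]
    constructor
    · rintro ⟨h1, h2, h3⟩
      exact ⟨⟨fun h => h2 h.symm, h1⟩, h3⟩
    · rintro ⟨⟨h1, h2⟩, h3⟩
      exact ⟨h2, fun h => h1 h.symm, h3⟩
  have h2 : degIn F U v = ((U.erase v).filter (fun u => F.Adj v u)).card := by
    unfold degIn
    congr 1
    ext u
    simp only [Finset.mem_filter, Finset.mem_erase]
    constructor
    · rintro ⟨h1, h3⟩
      exact ⟨⟨(F.ne_of_adj h3).symm, h1⟩, h3⟩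
    · rintro ⟨⟨_, h2⟩, h3⟩
      exact ⟨h2, h3⟩
  have h4 := Finset.card_erase_of_mem hv
  have h5 : 0 < U.card := Finset.card_pos.2 ⟨v, hv⟩
  omega

end RamseyAux

theorem stmt8 {α : Type*} [Fintype α] (k n : ℕ) (hk : 3 ≤ k) (hn : 12 * k ≤ n)
    (T : SimpleGraph α) (hcard : Fintype.card α = n) (htree : T.IsTree) :
    (ramseyNumber T (pathGraph k) : ℝ) ≤ 3 / 2 * n := by
  classical
  open RamseyAux in
  set N := n + n / 2 with hN
  have hn36 : 36 ≤ n := by omega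
  have hRam : RamseyProp N T (pathGraph k) := by
    intro F
    by_cases hpath : Contains Fᶜ (pathGraph k)
    · exact Or.inr hpath
    left
    have hno : ∀ l, PList Fᶜ l → (∀ x ∈ l, x ∈ (Finset.univ : Finset (Fin N))) →
        l.length < k := by
      intro l hl _
      by_contra hlen
      push_neg at hlen
      exact hpath (contains_of_plist Fᶜ (plist_take Fᶜ hl k)
        (by rw [List.length_take]; omega))
    have hEG := erdos_gallai Fᶜ hk (Finset.univ : Finset (Fin N)) hno
    rw [Finset.card_univ, Fintype.card_fin] at hEG
    set q := n / 4 with hq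
    obtain ⟨U, hUsub, hUdeg, hUsum⟩ := peel Fᶜ q (Finset.univ : Finset (Fin N))
    rw [Finset.card_univ, Fintype.card_fin] at hUsum
    have hUb : 2 * (q+1) * (N - U.card) ≤ (k-2) * N :=
      calc 2*(q+1)*(N - U.card) ≤ dsum Fᶜ U + 2*(q+1)*(N - U.card) := Nat.le_add_left _ _
        _ ≤ dsum Fᶜ Finset.univ := hUsum
        _ ≤ (k-2)*N := hEG
    have hUcard_le : U.card ≤ N := by
      have := Finset.card_le_card hUsub
      rwa [Finset.card_univ, Fintype.card_fin] at this
    have hkey : n + q ≤ U.card := by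
      by_contra hcon
      push_neg at hcon
      have h1 : q + 1 ≤ N - U.card := by omega
      have h2 : 2*(q+1)*(q+1) ≤ (k-2)*N := le_trans (Nat.mul_le_mul_left _ h1) hUb
      have e1 : n + 1 ≤ 4*q + 4 := by omega
      have e2 : 2*N ≤ 3*n + 1 := by omega
      have e3 : 12*(k-2) ≤ n - 24 := by omega
      have h4 : 24*(2*(q+1)*(q+1)) ≤ (n-24)*(3*n+1) :=
        calc 24*(2*(q+1)*(q+1)) ≤ 24*((k-2)*N) := Nat.mul_le_mul_left _ h2
          _ = (12*(k-2))*(2*N) := by ring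
          _ ≤ (n-24)*(3*n+1) := Nat.mul_le_mul e3 e2
      have h5 : 3*((n+1)*(n+1)) ≤ 48*((q+1)*(q+1)) :=
        calc 3*((n+1)*(n+1)) ≤ 3*((4*q+4)*(4*q+4)) :=
              Nat.mul_le_mul_left _ (Nat.mul_le_mul e1 e1)
          _ = 48*((q+1)*(q+1)) := by ring
      have h6 : 24*(2*(q+1)*(q+1)) = 48*((q+1)*(q+1)) := by ring
      obtain ⟨m, hm⟩ : ∃ m, n = m + 24 := ⟨n-24, by omega⟩
      rw [h6] at h4
      have h7 : 3*((n+1)*(n+1)) ≤ (n-24)*(3*n+1) := le_trans h5 h4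
      rw [hm] at h7
      have h8 : (m+24) - 24 = m := by omega
      rw [h8] at h7
      nlinarith [h7]
    have hUdegF : ∀ v ∈ U, n ≤ degIn F U v + 1 := by
      intro v hv
      have hcompl := degIn_compl F U hv
      have := hUdeg v hv
      omega
    obtain ⟨f, hfU, hfadj⟩ := tree_embed n T htree hcard F U hUdegF (by omega)
    exact ⟨f, hfadj⟩
  have hmem : N ∈ {N : ℕ | 0 < N ∧ RamseyProp N T (pathGraph k)} := ⟨by omega, hRam⟩
  have hle : ramseyNumber T (pathGraph k) ≤ N := Nat.sInf_le hmem
  have hcast : (ramseyNumber T (pathGraph k) : ℝ) ≤ (N : ℝ) := Nat.cast_le.2 hle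
  refine hcast.trans ?_
  rw [hN]
  push_cast
  have hdiv : ((n / 2 : ℕ) : ℝ) ≤ (n : ℝ) / 2 := Nat.cast_div_le
  linarith
end

section
/- Let k ≥ 3 and n ≥ 12k be integers. If G is a connected graph with n vertices and at most (1 + 1/(9k²))·n edges, then r(G, P_k) ≤ n + 23k². -/
open SimpleGraph

namespace Stmt9Aux


attribute [local instance] Classical.propDecidable

variable {V : Type*} [Fintype V] [DecidableEq V]

/-- DFS specification relative to an unexplored set `s` and ancestor stack `p`. -/
def DfsSpec (H : SimpleGraph V) (s : Finset V) (p : List V) (f : V → List V) : Prop :=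
  (∀ x ∈ s, ∃ l, f x = x :: l) ∧
  (∀ x ∈ s, (f x).Nodup) ∧
  (∀ x ∈ s, (f x).Chain' H.Adj) ∧
  (∀ x ∈ s, ∃ q pₓ, f x = q ++ pₓ ∧ (∀ a ∈ q, a ∈ s) ∧ pₓ <:+ p) ∧
  (∀ x ∈ s, ∀ y ∈ s, y ∈ f x → f y <:+ f x) ∧
  (∀ x ∈ s, ∀ w, H.Adj x w → w ∈ p → w ∈ f x) ∧
  (∀ x ∈ s, ∀ y ∈ s, H.Adj x y → x ∈ f y ∨ y ∈ f x)

lemma dfs_aux (H : SimpleGraph V) :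
    ∀ (n : ℕ) (s : Finset V) (p : List V),
    s.card * (Fintype.card V + 1) + p.length ≤ n →
    p.Nodup → (∀ x ∈ p, x ∉ s) → p.Chain' H.Adj →
    (∀ x ∈ s, ∀ y, H.Adj x y → y ∈ s ∨ y ∈ p) →
    ∃ f : V → List V, DfsSpec H s p f := by
  intro n
  induction n with
  | zero =>
    intro s p hn _ _ _ _
    have hs : s = ∅ := by
      by_contra h
      have : 1 ≤ s.card := Finset.card_pos.2 (Finset.nonempty_of_ne_empty h)
      nlinarith [Nat.zero_le p.length]
    subst hs
    exact ⟨fun x => [x], by simp [DfsSpec]⟩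
  | succ n ih =>
    intro s p hn hnd hdisj hch hedge
    by_cases hs : s = ∅
    · subst hs; exact ⟨fun x => [x], by simp [DfsSpec]⟩
    obtain ⟨v₀, hv₀⟩ := Finset.nonempty_of_ne_empty hs
    have hcardV : 1 ≤ Fintype.card V := by
      have := Finset.card_le_card (Finset.subset_univ s)
      have h1 : 1 ≤ s.card := Finset.card_pos.2 ⟨v₀, hv₀⟩
      simpa [Finset.card_univ] using le_trans h1 this
    by_cases hex : ∃ v ∈ s, ∀ (hp : p ≠ []), H.Adj v (p.head hp)
    · -- push case
      obtain ⟨v, hvs, hvadj⟩ := hex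
      have hvnp : v ∉ p := fun hvp => (hdisj v hvp) hvs
      have hmeas : (s.erase v).card * (Fintype.card V + 1) + (v :: p).length ≤ n := by
        have he : (s.erase v).card + 1 = s.card := by
          rw [Finset.card_erase_of_mem hvs]
          have h1 : 1 ≤ s.card := Finset.card_pos.2 ⟨v, hvs⟩
          omega
        have : (s.erase v).card * (Fintype.card V + 1) + (Fintype.card V + 1)
            = s.card * (Fintype.card V + 1) := by
          rw [← he]; ring
        simp only [List.length_cons]
        omega
      have hnd' : (v :: p).Nodup := by simp [hnd, hvnp]
      have hdisj' : ∀ x ∈ (v :: p), x ∉ s.erase v := by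
        intro x hx
        rcases List.mem_cons.1 hx with h | h
        · subst h; simp
        · intro hxe; exact (hdisj x h) (Finset.mem_of_mem_erase hxe)
      have hch' : (v :: p).Chain' H.Adj := by
        cases p with
        | nil => exact List.isChain_singleton v
        | cons h t =>
          refine List.isChain_cons_cons.2 ⟨?_, hch⟩
          exact hvadj (by simp)
      have hedge' : ∀ x ∈ s.erase v, ∀ y, H.Adj x y → y ∈ s.erase v ∨ y ∈ (v :: p) := by
        intro x hx y hxy
        rcases hedge x (Finset.mem_of_mem_erase hx) y hxy with h | h
        · by_cases hyv : y = v
          · exact Or.inr (by simp [hyv])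
          · exact Or.inl (Finset.mem_erase.2 ⟨hyv, h⟩)
        · exact Or.inr (by simp [h])
      obtain ⟨f₁, B1, B2, B3, B4, B5, B6, B7⟩ := ih (s.erase v) (v :: p) hmeas hnd' hdisj' hch' hedge'
      classical
      refine ⟨fun x => if x = v then v :: p else f₁ x, ?_, ?_, ?_, ?_, ?_, ?_, ?_⟩
      · intro x hx
        by_cases hxv : x = v
        · subst hxv; exact ⟨p, by simp⟩
        · simpa [hxv] using B1 x (Finset.mem_erase.2 ⟨hxv, hx⟩)
      · intro x hx
        by_cases hxv : x = v
        · subst hxv; simpa using hnd'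
        · simpa [hxv] using B2 x (Finset.mem_erase.2 ⟨hxv, hx⟩)
      · intro x hx
        by_cases hxv : x = v
        · subst hxv; simpa using hch'
        · simpa [hxv] using B3 x (Finset.mem_erase.2 ⟨hxv, hx⟩)
      · intro x hx
        by_cases hxv : x = v
        · subst hxv
          exact ⟨[x], p, by simp, by simp [hvs], List.suffix_refl p⟩
        · obtain ⟨q, px, hfx, hq, hpx⟩ := B4 x (Finset.mem_erase.2 ⟨hxv, hx⟩)
          rcases List.suffix_cons_iff.1 hpx with h | h
          · refine ⟨q ++ [v], p, by simp [hxv, hfx, h], ?_, List.suffix_refl p⟩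
            intro a ha
            rcases List.mem_append.1 ha with h' | h'
            · exact Finset.mem_of_mem_erase (hq a h')
            · simp at h'; subst h'; exact hvs
          · refine ⟨q, px, by simp [hxv, hfx], fun a ha => Finset.mem_of_mem_erase (hq a ha), h⟩
      · intro x hx y hy hyfx
        by_cases hxv : x = v
        · subst hxv
          simp only [if_pos rfl] at hyfx ⊢
          rcases List.mem_cons.1 hyfx with h | h
          · subst h; simp
          · exact absurd hy (hdisj y h)
        · simp only [if_neg hxv] at hyfx
          by_cases hyv : y = v
          · subst hyv
            simp only [if_pos rfl, if_neg hxv]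
            obtain ⟨q, px, hfx, hq, hpx⟩ := B4 x (Finset.mem_erase.2 ⟨hxv, hx⟩)
            have hyq : y ∉ q := fun h => (Finset.mem_erase.1 (hq y h)).1 rfl
            have hypx : y ∈ px := by
              rw [hfx] at hyfx
              rcases List.mem_append.1 hyfx with h | h
              · exact absurd h hyq
              · exact h
            rcases List.suffix_cons_iff.1 hpx with h | h
            · rw [hfx, h]; exact List.suffix_append q (y :: p)
            · exact absurd (h.subset hypx) hvnp
          · simp only [if_neg hxv, if_neg hyv]
            exact B5 x (Finset.mem_erase.2 ⟨hxv, hx⟩) y (Finset.mem_erase.2 ⟨hyv, hy⟩) hyfx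
      · intro x hx w hxw hwp
        by_cases hxv : x = v
        · subst hxv; simp [List.mem_cons, hwp]
        · simp only [if_neg hxv]
          exact B6 x (Finset.mem_erase.2 ⟨hxv, hx⟩) w hxw (by simp [hwp])
      · intro x hx y hy hxy
        by_cases hxv : x = v
        · subst hxv
          by_cases hyv : y = x
          · subst hyv; exact absurd hxy (H.irrefl)
          · left
            simp only [if_neg hyv]
            exact B6 y (Finset.mem_erase.2 ⟨hyv, hy⟩) x hxy.symm (by simp)
        · by_cases hyv : y = v
          · subst hyv
            right
            simp only [if_neg hxv]
            exact B6 x (Finset.mem_erase.2 ⟨hxv, hx⟩) y hxy (by simp)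
          · simp only [if_neg hxv, if_neg hyv]
            exact B7 x (Finset.mem_erase.2 ⟨hxv, hx⟩) y (Finset.mem_erase.2 ⟨hyv, hy⟩) hxy
    · -- pop case
      cases p with
      | nil => exact absurd ⟨v₀, hv₀, fun hp => absurd rfl hp⟩ hex
      | cons h t =>
        have hnadj : ∀ x ∈ s, ¬ H.Adj x h := by
          intro x hx hadj
          exact hex ⟨x, hx, fun _ => hadj⟩
        have hmeas : s.card * (Fintype.card V + 1) + t.length ≤ n := by
          simp only [List.length_cons] at hn; omega
        have hedge' : ∀ x ∈ s, ∀ y, H.Adj x y → y ∈ s ∨ y ∈ t := by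
          intro x hx y hxy
          rcases hedge x hx y hxy with h' | h'
          · exact Or.inl h'
          · rcases List.mem_cons.1 h' with h'' | h''
            · subst h''; exact absurd hxy (hnadj x hx)
            · exact Or.inr h''
        obtain ⟨f₁, B1, B2, B3, B4, B5, B6, B7⟩ := ih s t hmeas (List.Nodup.of_cons hnd)
          (fun x hx => hdisj x (by simp [hx])) (List.IsChain.tail hch) hedge'
        refine ⟨f₁, B1, B2, B3, ?_, B5, ?_, B7⟩
        · intro x hx
          obtain ⟨q, px, hfx, hq, hpx⟩ := B4 x hx
          exact ⟨q, px, hfx, hq, hpx.trans (List.suffix_cons h t)⟩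
        · intro x hx w hxw hwp
          rcases List.mem_cons.1 hwp with h' | h'
          · subst h'; exact absurd hxw (hnadj x hx)
          · exact B6 x hx w hxw h'

/-- Global DFS structure: every vertex gets an `H`-path (its root-path), suffix-closed,
with adjacent vertices comparable. -/
lemma dfs_exists (H : SimpleGraph V) :
    ∃ f : V → List V,
      (∀ x, ∃ l, f x = x :: l) ∧
      (∀ x, (f x).Nodup) ∧
      (∀ x, (f x).Chain' H.Adj) ∧
      (∀ x y, y ∈ f x → f y <:+ f x) ∧
      (∀ x y, H.Adj x y → x ∈ f y ∨ y ∈ f x) := by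
  obtain ⟨f, A1, A2, A3, _, A5, _, A7⟩ :=
    dfs_aux H (Fintype.card V * (Fintype.card V + 1)) Finset.univ []
      (by simp [Finset.card_univ]) (by simp) (by simp) List.isChain_nil (by simp)
  exact ⟨f, fun x => A1 x (Finset.mem_univ x), fun x => A2 x (Finset.mem_univ x),
    fun x => A3 x (Finset.mem_univ x),
    fun x y hy => A5 x (Finset.mem_univ x) y (Finset.mem_univ y) hy,
    fun x y hxy => A7 x (Finset.mem_univ x) y (Finset.mem_univ y) hxy⟩



attribute [local instance] Classical.propDecidable

variable {V : Type*} [Fintype V] [DecidableEq V]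

section Mset
variable (f : V → List V)

/-- Minimal elements of `U` w.r.t. the DFS descendant order. -/
def Mset (U : Finset V) : Finset V := U.filter (fun m => ∀ u ∈ U, m ∈ f u → u = m)

variable {f}

lemma self_mem_f (hhead : ∀ x, ∃ l, f x = x :: l) (x : V) : x ∈ f x := by
  obtain ⟨l, hl⟩ := hhead x; rw [hl]; simp

lemma f_antisymm (hhead : ∀ x, ∃ l, f x = x :: l) (hsuf : ∀ x y, y ∈ f x → f y <:+ f x)
    (x y : V) (hxy : x ∈ f y) (hyx : y ∈ f x) : x = y := by
  have h1 := hsuf y x hxy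
  have h2 := hsuf x y hyx
  have heq : f x = f y := h1.sublist.antisymm h2.sublist
  obtain ⟨l, hl⟩ := hhead x
  obtain ⟨l', hl'⟩ := hhead y
  rw [hl, hl'] at heq
  simpa using congrArg List.head? heq

lemma mset_subset (U : Finset V) : Mset f U ⊆ U := Finset.filter_subset _ _

lemma mset_min {U : Finset V} {m : V} (hm : m ∈ Mset f U) : ∀ u ∈ U, m ∈ f u → u = m :=
  (Finset.mem_filter.1 hm).2

lemma exists_min (hhead : ∀ x, ∃ l, f x = x :: l) (hsuf : ∀ x y, y ∈ f x → f y <:+ f x) :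
    ∀ (c : ℕ) (U : Finset V) (x : V), x ∈ U →
    (U.filter (fun u => x ∈ f u)).card ≤ c → ∃ m ∈ Mset f U, x ∈ f m := by
  intro c
  induction c with
  | zero =>
    intro U x hx hc
    have hpos : 0 < (U.filter (fun u => x ∈ f u)).card :=
      Finset.card_pos.2 ⟨x, Finset.mem_filter.2 ⟨hx, self_mem_f hhead x⟩⟩
    omega
  | succ c ih =>
    intro U x hx hc
    by_cases hmin : ∀ u ∈ U, x ∈ f u → u = x
    · exact ⟨x, Finset.mem_filter.2 ⟨hx, hmin⟩, self_mem_f hhead x⟩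
    · push_neg at hmin
      obtain ⟨u, hu, hxfu, hux⟩ := hmin
      have hsub : U.filter (fun w => u ∈ f w) ⊆ (U.filter (fun w => x ∈ f w)).erase x := by
        intro w hw
        obtain ⟨hwU, hufw⟩ := Finset.mem_filter.1 hw
        have hxfw : x ∈ f w := (hsuf w u hufw).subset hxfu
        refine Finset.mem_erase.2 ⟨?_, Finset.mem_filter.2 ⟨hwU, hxfw⟩⟩
        intro hwx
        rw [hwx] at hufw
        exact hux (f_antisymm hhead hsuf u x hufw hxfu)
      have hcard : (U.filter (fun w => u ∈ f w)).card ≤ c := by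
        have h1 := Finset.card_le_card hsub
        have h2 : ((U.filter (fun w => x ∈ f w)).erase x).card
            = (U.filter (fun w => x ∈ f w)).card - 1 :=
          Finset.card_erase_of_mem (Finset.mem_filter.2 ⟨hx, self_mem_f hhead x⟩)
        have h3 : 1 ≤ (U.filter (fun w => x ∈ f w)).card :=
          Finset.card_pos.2 ⟨x, Finset.mem_filter.2 ⟨hx, self_mem_f hhead x⟩⟩
        omega
      obtain ⟨m, hm, humem⟩ := ih U u hu hcard
      exact ⟨m, hm, (hsuf m u humem).subset hxfu⟩

lemma exists_min' (hhead : ∀ x, ∃ l, f x = x :: l) (hsuf : ∀ x y, y ∈ f x → f y <:+ f x)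
    (U : Finset V) (x : V) (hx : x ∈ U) : ∃ m ∈ Mset f U, x ∈ f m :=
  exists_min hhead hsuf _ U x hx le_rfl

lemma card_le_mul (hhead : ∀ x, ∃ l, f x = x :: l) (hsuf : ∀ x y, y ∈ f x → f y <:+ f x)
    {D : ℕ} (hlen : ∀ x, (f x).length ≤ D) (U : Finset V) :
    U.card ≤ D * (Mset f U).card := by
  classical
  choose g hg1 hg2 using fun (x : V) (hx : x ∈ U) => exists_min' hhead hsuf U x hx
  set G : V → V := fun x => if hx : x ∈ U then g x hx else x with hG
  refine Finset.card_le_mul_card_image_of_maps_to (f := G) ?_ D ?_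
  · intro a ha
    simp only [hG, dif_pos ha]
    exact hg1 a ha
  · intro b _
    have hsub : U.filter (fun a => G a = b) ⊆ (f b).toFinset := by
      intro a ha
      obtain ⟨haU, hab⟩ := Finset.mem_filter.1 ha
      simp only [hG, dif_pos haU] at hab
      rw [List.mem_toFinset, ← hab]
      exact hg2 a haU
    exact (Finset.card_le_card hsub).trans ((List.toFinset_card_le _).trans (hlen b))

lemma mset_not_adj {H : SimpleGraph V}
    (hadj5 : ∀ x y, H.Adj x y → x ∈ f y ∨ y ∈ f x)
    {U : Finset V} {p q : V} (hp : p ∈ Mset f U) (hq : q ∈ Mset f U) (hne : p ≠ q) :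
    ¬ H.Adj p q := by
  intro hadj
  rcases hadj5 p q hadj with h | h
  · exact hne (mset_min hp q (mset_subset U hq) h).symm
  · exact hne (mset_min hq p (mset_subset U hp) h)

end Mset

/-- Extract a path embedding from a long nodup `H`-chain. -/
lemma contains_path_of_chain {W : Type*} (H : SimpleGraph W) (k : ℕ) (l : List W)
    (hc : l.Chain' H.Adj) (hd : l.Nodup) (hk : k ≤ l.length) :
    Contains H (pathGraph k) := by
  have hget : Function.Injective l.get := List.nodup_iff_injective_get.1 hd
  refine ⟨⟨fun i => l.get ⟨i.1, lt_of_lt_of_le i.2 hk⟩, ?_⟩, ?_⟩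
  · intro i j hij
    have := congrArg Fin.val (hget hij)
    exact Fin.ext this
  · intro a b hab
    rw [SimpleGraph.pathGraph_adj] at hab
    have hchain : ∀ i (h : i < l.length - 1), H.Adj (l.get ⟨i, by omega⟩) (l.get ⟨i + 1, by omega⟩) :=
      fun i h => List.isChain_iff_getElem.1 hc i (by omega)
    rcases hab with h | h
    · have hb : (b : ℕ) < l.length := lt_of_lt_of_le b.2 hk
      have h2 := hchain a.1 (by omega)
      have e1 : l.get ⟨a.1 + 1, by omega⟩ = l.get ⟨b.1, hb⟩ := by congr 1; exact Fin.ext h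
      rw [e1] at h2
      exact h2
    · have ha : (a : ℕ) < l.length := lt_of_lt_of_le a.2 hk
      have h2 := hchain b.1 (by omega)
      have e1 : l.get ⟨b.1 + 1, by omega⟩ = l.get ⟨a.1, ha⟩ := by congr 1; exact Fin.ext h
      rw [e1] at h2
      exact h2.symm


lemma ext_lemma {A : Type*} [Fintype A] [DecidableEq A]
    (G : SimpleGraph A) (H : SimpleGraph V) (f : V → List V)
    (hhead : ∀ x, ∃ l, f x = x :: l) (hsuf : ∀ x y, y ∈ f x → f y <:+ f x)
    (hadj5 : ∀ x y, H.Adj x y → x ∈ f y ∨ y ∈ f x)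
    {d : ℕ} (hlen : ∀ x, (f x).length ≤ d)
    (core : Finset A)
    (hcore_le : core.card ≤ (Mset f (Finset.univ : Finset V)).card)
    (hbig : (Fintype.card A - 1) + 3 * d * d < Fintype.card V) :
    ∀ (rest : List A) (dom : Finset A) (φ : A → V),
    (dom ∪ rest.toFinset = Finset.univ) →
    (∀ w ∈ rest, w ∉ dom) →
    rest.Nodup →
    (∀ u l₂, (u :: l₂) <:+ rest →
        (u ∈ core ∧ ((Finset.univ \ (u :: l₂).toFinset : Finset A) ⊆ core)) ∨
        (u ∉ core ∧ (G.neighborFinset u \ (u :: l₂).toFinset).card ≤ 3)) →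
    (Set.InjOn φ ↑dom) →
    (∀ u ∈ dom, ∀ v ∈ dom, G.Adj u v → ¬ H.Adj (φ u) (φ v)) →
    (∀ u ∈ dom, ∀ p : V, φ u ∈ f p → p ∈ dom.image φ) →
    (∀ u ∈ dom, u ∈ core → φ u ∈ Mset f (Finset.univ : Finset V)) →
    ∃ ψ : A → V, Function.Injective ψ ∧ ∀ u v, G.Adj u v → ¬ H.Adj (ψ u) (ψ v) := by
  intro rest
  induction rest with
  | nil =>
    intro dom φ hcover _ _ _ hinj hadj _ _
    have hdom : dom = Finset.univ := by simpa using hcover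
    subst hdom
    refine ⟨φ, ?_, fun u v huv => hadj u (Finset.mem_univ u) v (Finset.mem_univ v) huv⟩
    rw [← Set.injOn_univ]
    simpa using hinj
  | cons u rest' ih =>
    intro dom φ hcover hdisj hnd hcase hinj hadj hinv3 hinv4
    have hu_dom : u ∉ dom := hdisj u (by simp)
    have hu_rest' : u ∉ rest' := by simp at hnd; exact hnd.1
    have hrest'_dom : ∀ w ∈ rest', w ∉ dom := fun w hw => hdisj w (by simp [hw])
    -- find the new image p for u, and establish its key properties
    have hmain : ∃ p : V, (p ∉ dom.image φ) ∧
        (∀ q : V, p ∈ f q → q = p ∨ q ∈ dom.image φ) ∧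
        (∀ v ∈ dom, G.Adj u v → ¬ H.Adj p (φ v)) ∧
        (u ∈ core → p ∈ Mset f (Finset.univ : Finset V)) := by
      rcases hcase u rest' (List.suffix_refl _) with ⟨hucore, hsub⟩ | ⟨hunc, hdeg⟩
      · -- core case
        have hdomsub : dom ⊆ core := by
          intro v hv
          apply hsub
          simp only [Finset.mem_sdiff, Finset.mem_univ, true_and]
          intro hvmem
          rcases List.mem_cons.1 (List.mem_toFinset.1 hvmem) with h | h
          · exact hu_dom (h ▸ hv)
          · exact hrest'_dom v h hv
        have hdomlt : dom.card < core.card :=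
          Finset.card_lt_card ⟨hdomsub, fun hs => hu_dom (hs hucore)⟩
        have himgcard : (dom.image φ).card ≤ dom.card := Finset.card_image_le
        have hne : (Mset f (Finset.univ : Finset V) \ dom.image φ).Nonempty := by
          rw [← Finset.card_pos]
          have h1 := Finset.le_card_sdiff (dom.image φ) (Mset f (Finset.univ : Finset V))
          omega
        obtain ⟨p, hp⟩ := hne
        obtain ⟨hpM, hpimg⟩ := Finset.mem_sdiff.1 hp
        refine ⟨p, hpimg, ?_, ?_, fun _ => hpM⟩
        · intro q hq
          exact Or.inl (mset_min hpM q (Finset.mem_univ q) hq)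
        · intro v hv _
          have hvM : φ v ∈ Mset f (Finset.univ : Finset V) := hinv4 v hv (hdomsub hv)
          have hne' : p ≠ φ v := fun h => hpimg (h ▸ Finset.mem_image_of_mem φ hv)
          exact mset_not_adj hadj5 hpM hvM hne'
      · -- generic case
        set U := (Finset.univ : Finset V) \ dom.image φ with hU
        have hdomcard : dom.card ≤ Fintype.card A - 1 := by
          have hsub : dom ⊆ Finset.univ.erase u := fun v hv =>
            Finset.mem_erase.2 ⟨fun h => hu_dom (h ▸ hv), Finset.mem_univ v⟩
          have := Finset.card_le_card hsub
          rw [Finset.card_erase_of_mem (Finset.mem_univ u), Finset.card_univ] at this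
          exact this
        have hUcard : Fintype.card V - (Fintype.card A - 1) ≤ U.card := by
          rw [hU, Finset.card_sdiff_of_subset (Finset.subset_univ _), Finset.card_univ]
          have h1 : (dom.image φ).card ≤ dom.card := Finset.card_image_le
          omega
        have hMbig : 3 * d < (Mset f U).card := by
          by_contra hle
          push_neg at hle
          have h1 : U.card ≤ d * (Mset f U).card := card_le_mul hhead hsuf hlen U
          have h2 : U.card ≤ d * (3 * d) := le_trans h1 (Nat.mul_le_mul_left d hle)
          have h3 : d * (3 * d) = 3 * d * d := by ring
          omega
        set T := G.neighborFinset u ∩ dom with hT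
        have hTcard : T.card ≤ 3 := by
          refine le_trans (Finset.card_le_card ?_) hdeg
          intro v hv
          obtain ⟨hv1, hv2⟩ := Finset.mem_inter.1 hv
          refine Finset.mem_sdiff.2 ⟨hv1, ?_⟩
          intro hvmem
          rcases List.mem_cons.1 (List.mem_toFinset.1 hvmem) with h | h
          · exact hu_dom (h ▸ hv2)
          · exact hrest'_dom v h hv2
        set B := T.biUnion (fun v => (f (φ v)).toFinset) with hB
        have hBcard : B.card ≤ 3 * d := by
          refine le_trans Finset.card_biUnion_le ?_
          calc ∑ v ∈ T, (f (φ v)).toFinset.card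
              ≤ ∑ _v ∈ T, d := Finset.sum_le_sum
                  (fun v _ => (List.toFinset_card_le _).trans (hlen _))
            _ = T.card * d := by rw [Finset.sum_const, smul_eq_mul]
            _ ≤ 3 * d := Nat.mul_le_mul_right d hTcard
        have hne : (Mset f U \ B).Nonempty := by
          rw [← Finset.card_pos]
          have h1 := Finset.le_card_sdiff B (Mset f U)
          omega
        obtain ⟨p, hp⟩ := hne
        obtain ⟨hpM, hpB⟩ := Finset.mem_sdiff.1 hp
        have hpU : p ∈ U := mset_subset U hpM
        have hpimg : p ∉ dom.image φ := (Finset.mem_sdiff.1 hpU).2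
        refine ⟨p, hpimg, ?_, ?_, fun hc => absurd hc hunc⟩
        · intro q hq
          by_cases hqU : q ∈ U
          · exact Or.inl (mset_min hpM q hqU hq)
          · refine Or.inr ?_
            by_contra hqimg
            exact hqU (Finset.mem_sdiff.2 ⟨Finset.mem_univ q, hqimg⟩)
        · intro v hv hadjuv hHadj
          have hvT : v ∈ T := Finset.mem_inter.2 ⟨(G.mem_neighborFinset u v).2 hadjuv, hv⟩
          rcases hadj5 p (φ v) hHadj with h | h
          · exact hpB (Finset.mem_biUnion.2 ⟨v, hvT, List.mem_toFinset.2 h⟩)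
          · exact hpimg (hinv3 v hv p h)
    obtain ⟨p, hpimg, hpmin, hpadj, hpcore⟩ := hmain
    classical
    set φ' := Function.update φ u p with hφ'
    have hφ'u : φ' u = p := by rw [hφ']; exact Function.update_self u p φ
    have hφ'dom : ∀ v ∈ dom, φ' v = φ v := by
      intro v hv
      rw [hφ']
      refine Function.update_of_ne ?_ p φ
      intro h
      rw [h] at hv
      exact hu_dom hv
    have himg : (insert u dom).image φ' = insert p (dom.image φ) := by
      rw [Finset.image_insert, hφ'u]
      congr 1
      exact Finset.image_congr (fun v hv => hφ'dom v hv)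
    refine ih (insert u dom) φ' ?_ ?_ ?_ ?_ ?_ ?_ ?_ ?_
    · -- cover
      ext a
      have := Finset.ext_iff.1 hcover a
      simp only [Finset.mem_union, List.toFinset_cons, Finset.mem_insert,
        List.mem_toFinset, Finset.mem_univ, iff_true] at this ⊢
      tauto
    · intro w hw
      simp only [Finset.mem_insert]
      push_neg
      constructor
      · intro h
        rw [h] at hw
        exact hu_rest' hw
      · exact hrest'_dom w hw
    · exact (List.nodup_cons.1 hnd).2
    · intro v l₂ hsuffix
      exact hcase v l₂ (hsuffix.trans (List.suffix_cons u rest'))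
    · -- InjOn
      intro a ha b hb heq
      simp only [Finset.coe_insert, Set.mem_insert_iff, Finset.mem_coe] at ha hb
      rcases ha with rfl | ha <;> rcases hb with rfl | hb
      · rfl
      · exfalso
        rw [hφ'u, hφ'dom b hb] at heq
        exact hpimg (heq ▸ Finset.mem_image_of_mem φ hb)
      · exfalso
        rw [hφ'u, hφ'dom a ha] at heq
        exact hpimg (heq ▸ Finset.mem_image_of_mem φ ha)
      · rw [hφ'dom a ha, hφ'dom b hb] at heq
        exact hinj ha hb heq
    · -- adjacency invariant
      intro v hv w hw hvw
      rcases Finset.mem_insert.1 hv with rfl | hv' <;> rcases Finset.mem_insert.1 hw with rfl | hw'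
      · exact absurd hvw (G.irrefl)
      · rw [hφ'dom w hw', hφ'u]
        exact hpadj w hw' hvw
      · rw [hφ'dom v hv', hφ'u]
        intro hH
        exact (hpadj v hv' hvw.symm) hH.symm
      · rw [hφ'dom v hv', hφ'dom w hw']
        exact hadj v hv' w hw' hvw
    · -- inv3
      intro w hw q hq
      rw [himg]
      rcases Finset.mem_insert.1 hw with rfl | hw'
      · rw [hφ'u] at hq
        rcases hpmin q hq with h | h
        · exact Finset.mem_insert.2 (Or.inl h)
        · exact Finset.mem_insert.2 (Or.inr h)
      · rw [hφ'dom w hw'] at hq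
        exact Finset.mem_insert.2 (Or.inr (hinv3 w hw' q hq))
    · -- inv4
      intro w hw hwc
      rcases Finset.mem_insert.1 hw with rfl | hw'
      · rw [hφ'u]
        exact hpcore hwc
      · rw [hφ'dom w hw']
        exact hinv4 w hw' hwc

lemma suffix_append_singleton {A : Type*} {l l₂ : List A} {u v : A}
    (h : (v :: l₂) <:+ l ++ [u]) :
    (v = u ∧ l₂ = []) ∨ ∃ l₃, l₂ = l₃ ++ [u] ∧ (v :: l₃) <:+ l := by
  obtain ⟨t, ht⟩ := h
  rcases List.eq_nil_or_concat l₂ with rfl | ⟨l₃, w, rfl⟩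
  · left
    have hlen : t.length = l.length := by
      have := congrArg List.length ht
      simp at this
      omega
    obtain ⟨h1, h2⟩ := List.append_inj ht hlen
    have : v = u := by simpa using h2
    exact ⟨this, rfl⟩
  · right
    have ht' : (t ++ (v :: l₃)) ++ [w] = l ++ [u] := by
      rw [← ht]; simp
    have hlen : (t ++ (v :: l₃)).length = l.length := by
      have := congrArg List.length ht'
      simp at this ⊢
      omega
    obtain ⟨h1, h2⟩ := List.append_inj ht' hlen
    have hw : w = u := by simpa using h2
    exact ⟨l₃, by rw [hw, List.concat_eq_append], ⟨t, h1⟩⟩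

lemma peel_lemma {A : Type*} [Fintype A] [DecidableEq A] (G : SimpleGraph A) :
    ∀ (c : ℕ) (s : Finset A), s.card ≤ c →
    ∃ (core : Finset A) (l : List A),
      l.Nodup ∧
      core ∪ l.toFinset = s ∧
      (∀ x ∈ core, x ∉ l.toFinset) ∧
      (∀ u ∈ core, 4 ≤ (G.neighborFinset u ∩ core).card) ∧
      (∀ u l₂, (u :: l₂) <:+ l → (G.neighborFinset u ∩ (s \ (u :: l₂).toFinset)).card ≤ 3) := by
  intro c
  induction c with
  | zero =>
    intro s hs
    have : s = ∅ := Finset.card_eq_zero.1 (by omega)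
    subst this
    exact ⟨∅, [], by simp⟩
  | succ c ih =>
    intro s hs
    by_cases hex : ∃ u ∈ s, (G.neighborFinset u ∩ s).card ≤ 3
    · obtain ⟨u, hus, hudeg⟩ := hex
      have hcard : (s.erase u).card ≤ c := by
        rw [Finset.card_erase_of_mem hus]
        have : 1 ≤ s.card := Finset.card_pos.2 ⟨u, hus⟩
        omega
      obtain ⟨core, l, hlnd, hcup, hcdisj, hcdeg, hldeg⟩ := ih (s.erase u) hcard
      have hul : u ∉ l := by
        intro hul
        have : u ∈ s.erase u := by
          rw [← hcup]
          exact Finset.mem_union_right _ (List.mem_toFinset.2 hul)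
        simp at this
      refine ⟨core, l ++ [u], ?_, ?_, ?_, hcdeg, ?_⟩
      · simp [List.nodup_append, hlnd, hul]
        intro a ha h; subst h; exact hul ha
      · have hsub : ∀ a, a ∈ core ∪ l.toFinset ↔ a ∈ s.erase u := fun a => by rw [hcup]
        ext a
        simp only [List.toFinset_append, List.toFinset_cons, List.toFinset_nil,
          LawfulSingleton.insert_empty_eq, Finset.mem_union, Finset.mem_singleton]
        have hthis := hsub a
        simp only [Finset.mem_union, Finset.mem_erase] at hthis
        constructor
        · rintro (h | h | rfl)
          · exact (hthis.1 (Or.inl h)).2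
          · exact (hthis.1 (Or.inr h)).2
          · exact hus
        · intro ha
          by_cases hau : a = u
          · right; right; exact hau
          · rcases hthis.2 ⟨hau, ha⟩ with h | h
            · exact Or.inl h
            · right; left; exact h
      · intro x hx
        rw [List.toFinset_append]
        simp only [Finset.mem_union, List.mem_toFinset, List.toFinset_cons, List.toFinset_nil]
        push_neg
        constructor
        · exact fun h => (hcdisj x hx) (List.mem_toFinset.2 h)
        · have hxe : x ∈ s.erase u := by
            rw [← hcup]; exact Finset.mem_union_left _ hx
          simp only [List.mem_toFinset] at *
          intro hmem
          simp at hmem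
          subst hmem
          simp at hxe
      · intro v l₂ hsuffix
        rcases suffix_append_singleton hsuffix with ⟨rfl, rfl⟩ | ⟨l₃, rfl, hsuf3⟩
        · -- v = u, l₂ = []
          refine le_trans (Finset.card_le_card ?_) hudeg
          intro w hw
          obtain ⟨hw1, hw2⟩ := Finset.mem_inter.1 hw
          exact Finset.mem_inter.2 ⟨hw1, (Finset.mem_sdiff.1 hw2).1⟩
        · -- deeper suffix
          have hld := hldeg v l₃ hsuf3
          refine le_trans (le_of_eq (congrArg Finset.card ?_)) hld
          ext w
          simp only [Finset.mem_inter, Finset.mem_sdiff, List.toFinset_cons,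
            List.toFinset_append, List.toFinset_nil, LawfulSingleton.insert_empty_eq, Finset.mem_insert,
            Finset.mem_union, List.mem_toFinset, Finset.mem_erase, Finset.mem_singleton]
          tauto
    · push_neg at hex
      refine ⟨s, [], by simp, by simp, by simp, ?_, by simp⟩
      intro u hu
      have := hex u hu
      omega

lemma core_bound {A : Type*} [Fintype A] [DecidableEq A] (G : SimpleGraph A)
    (hconn : G.Connected) (core : Finset A) (hcne : core.Nonempty)
    (hcdeg : ∀ u ∈ core, 4 ≤ (G.neighborFinset u ∩ core).card) :
    Fintype.card A + core.card ≤ G.edgeFinset.card := by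
  classical
  obtain ⟨r, hr⟩ := hcne
  let G' : SimpleGraph A :=
    { Adj := fun a b => G.Adj a b ∧ a ∈ core ∧ b ∈ core
      symm := ⟨fun a b h => ⟨h.1.symm, h.2.2, h.2.1⟩⟩
      loopless := ⟨fun a h => G.irrefl h.1⟩ }
  have hG'le : G' ≤ G := fun a b h => h.1
  have hnbr : ∀ u ∈ core, G'.neighborFinset u = G.neighborFinset u ∩ core := by
    intro u hu
    ext b
    simp only [SimpleGraph.mem_neighborFinset, Finset.mem_inter]
    exact ⟨fun h => ⟨h.1, h.2.2⟩, fun h => ⟨h.1, hu, h.2⟩⟩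
  have hdeg' : ∀ u ∈ core, 4 ≤ G'.degree u := by
    intro u hu
    rw [SimpleGraph.degree, hnbr u hu]
    exact hcdeg u hu
  have hsum : 4 * core.card ≤ 2 * G'.edgeFinset.card := by
    rw [← SimpleGraph.sum_degrees_eq_twice_card_edges]
    calc 4 * core.card = ∑ _u ∈ core, 4 := by rw [Finset.sum_const, smul_eq_mul]; ring
      _ ≤ ∑ u ∈ core, G'.degree u := Finset.sum_le_sum hdeg'
      _ ≤ ∑ u : A, G'.degree u :=
          Finset.sum_le_sum_of_subset (Finset.subset_univ core)
  -- the escape map towards the root r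
  have hstep : ∀ v : A, v ≠ r → ∃ w, G.Adj v w ∧ G.dist w r < G.dist v r := by
    intro v hv
    obtain ⟨p, hp⟩ := (hconn.preconnected v r).exists_walk_length_eq_dist
    have hpos : 0 < G.dist v r := hconn.pos_dist_of_ne hv
    cases p with
    | nil => exact absurd rfl hv
    | @cons _ w _ hadj q =>
      refine ⟨w, hadj, ?_⟩
      have h1 : G.dist w r ≤ q.length := SimpleGraph.dist_le q
      rw [SimpleGraph.Walk.length_cons] at hp
      omega
  classical
  set nxt : A → A := fun v => if h : v ≠ r then Classical.choose (hstep v h) else v with hnxt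
  have hnxt_adj : ∀ v, v ≠ r → G.Adj v (nxt v) ∧ G.dist (nxt v) r < G.dist v r := by
    intro v hv
    rw [hnxt]
    simp only [dif_pos hv]
    exact Classical.choose_spec (hstep v hv)
  have hvr : ∀ v ∈ Finset.univ \ core, v ≠ r := by
    intro v hv
    obtain ⟨_, hv2⟩ := Finset.mem_sdiff.1 hv
    exact fun h => hv2 (h ▸ hr)
  set outE : Finset (Sym2 A) := (Finset.univ \ core).image (fun v => s(v, nxt v)) with houtE
  have hinj : Set.InjOn (fun v => s(v, nxt v)) ↑(Finset.univ \ core) := by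
    intro a ha b hb heq
    simp only at heq
    rcases Sym2.eq_iff.1 heq with ⟨h1, _⟩ | ⟨h1, h2⟩
    · exact h1
    · exfalso
      have hda := (hnxt_adj a (hvr a ha)).2
      have hdb := (hnxt_adj b (hvr b hb)).2
      rw [h2] at hda
      rw [← h1] at hdb
      omega
  have houtcard : outE.card = Fintype.card A - core.card := by
    rw [houtE, Finset.card_image_of_injOn hinj, Finset.card_sdiff_of_subset (Finset.subset_univ core),
      Finset.card_univ]
  have houtsub : outE ⊆ G.edgeFinset := by
    intro e he
    obtain ⟨v, hv, rfl⟩ := Finset.mem_image.1 he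
    rw [SimpleGraph.mem_edgeFinset, SimpleGraph.mem_edgeSet]
    exact (hnxt_adj v (hvr v hv)).1
  have hdisj : Disjoint G'.edgeFinset outE := by
    rw [Finset.disjoint_right]
    intro e he hce
    obtain ⟨v, hv, rfl⟩ := Finset.mem_image.1 he
    rw [SimpleGraph.mem_edgeFinset, SimpleGraph.mem_edgeSet] at hce
    exact (Finset.mem_sdiff.1 hv).2 hce.2.1
  have hsubun : G'.edgeFinset ∪ outE ⊆ G.edgeFinset :=
    Finset.union_subset (SimpleGraph.edgeFinset_mono hG'le) houtsub
  have hcardun : G'.edgeFinset.card + outE.card ≤ G.edgeFinset.card := by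
    rw [← Finset.card_union_of_disjoint hdisj]
    exact Finset.card_le_card hsubun
  have hmn : core.card ≤ Fintype.card A := by
    rw [← Finset.card_univ]
    exact Finset.card_le_card (Finset.subset_univ core)
  omega

lemma suffix_append_cases {A : Type*} : ∀ (L : List A) {t B : List A}, t <:+ L ++ B →
    t <:+ B ∨ ∃ s', s' ≠ [] ∧ s' <:+ L ∧ t = s' ++ B := by
  intro L
  induction L with
  | nil => intro t B h; exact Or.inl (by simpa using h)
  | cons a L ih =>
    intro t B h
    obtain ⟨p, hp⟩ := h
    cases p with
    | nil =>
      right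
      refine ⟨a :: L, by simp, List.suffix_refl _, ?_⟩
      simpa using hp
    | cons x p' =>
      have hp2 : x :: (p' ++ t) = a :: (L ++ B) := by simpa using hp
      have hp' : p' ++ t = L ++ B := by injection hp2
      rcases ih ⟨p', hp'⟩ with h | ⟨s', h1, h2, h3⟩
      · exact Or.inl h
      · exact Or.inr ⟨s', h1, h2.trans (List.suffix_cons a L), h3⟩

end Stmt9Aux

theorem stmt9 {α : Type*} [Fintype α] (k n : ℕ) (hk : 3 ≤ k) (hn : 12 * k ≤ n)
    (G : SimpleGraph α) (hcard : Fintype.card α = n) (hconn : G.Connected)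
    (hedges : (G.edgeSet.ncard : ℝ) ≤ (1 + 1 / (9 * (k : ℝ) ^ 2)) * n) :
    ramseyNumber G (pathGraph k) ≤ n + 23 * k ^ 2 := by
  classical
  have hn1 : 1 ≤ n := by omega
  set N := n + 23 * k ^ 2 with hN
  apply Nat.sInf_le
  refine ⟨by omega, ?_⟩
  intro F
  obtain ⟨f, hhead, hnodup, hchain, hsuf, hadj5⟩ := Stmt9Aux.dfs_exists (V := Fin N) Fᶜ
  by_cases hlen : ∀ x, (f x).length ≤ k - 1
  · -- embed G into F
    left
    obtain ⟨core, l, hlnd, hcup, hcdisj, hcdeg, hldeg⟩ :=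
      Stmt9Aux.peel_lemma G (Fintype.card α) Finset.univ (by rw [Finset.card_univ])
    -- number of edges
    have hecard : G.edgeSet.ncard = G.edgeFinset.card := by
      rw [Set.ncard_eq_toFinset_card']
      congr 1
    -- core is small : core.card * (k-1) ≤ n
    have hcore_n : core.card * (k - 1) ≤ n := by
      rcases Finset.eq_empty_or_nonempty core with rfl | hcne
      · simp
      · have hcb := Stmt9Aux.core_bound G hconn core hcne hcdeg
        rw [hcard] at hcb
        -- to reals
        have hkR : (3 : ℝ) ≤ (k : ℝ) := by exact_mod_cast hk
        have h9 : (0 : ℝ) < 9 * (k : ℝ) ^ 2 := by positivity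
        have heR : ((n : ℝ) + core.card ≤ (1 + 1 / (9 * (k : ℝ) ^ 2)) * n) := by
          calc (n : ℝ) + core.card ≤ G.edgeFinset.card := by exact_mod_cast hcb
            _ = (G.edgeSet.ncard : ℝ) := by rw [hecard]
            _ ≤ _ := hedges
        have hmR : (core.card : ℝ) * (9 * (k : ℝ) ^ 2) ≤ n := by
          have h1 : (core.card : ℝ) ≤ (n : ℝ) / (9 * (k : ℝ) ^ 2) := by
            have hrhs : (1 + 1 / (9 * (k : ℝ) ^ 2)) * n = n + n / (9 * (k : ℝ) ^ 2) := by
              field_simp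
            rw [hrhs] at heR
            linarith
          calc (core.card : ℝ) * (9 * (k : ℝ) ^ 2)
              ≤ ((n : ℝ) / (9 * (k : ℝ) ^ 2)) * (9 * (k : ℝ) ^ 2) :=
                mul_le_mul_of_nonneg_right h1 (le_of_lt h9)
            _ = n := div_mul_cancel₀ _ (ne_of_gt h9)
        have hgoalR : (core.card : ℝ) * ((k : ℝ) - 1) ≤ n := by
          have hle : (k : ℝ) - 1 ≤ 9 * (k : ℝ) ^ 2 := by nlinarith
          have hm0 : (0 : ℝ) ≤ (core.card : ℝ) := Nat.cast_nonneg _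
          nlinarith [mul_le_mul_of_nonneg_left hle hm0, hmR]
        have hcast : ((core.card * (k - 1) : ℕ) : ℝ) ≤ (n : ℝ) := by
          push_cast [Nat.cast_sub (by omega : 1 ≤ k)]
          exact hgoalR
        exact_mod_cast hcast
    -- the minimal antichain of everything is large
    have hMuniv : N ≤ (k - 1) * (Stmt9Aux.Mset f (Finset.univ : Finset (Fin N))).card := by
      have h := Stmt9Aux.card_le_mul hhead hsuf hlen (Finset.univ : Finset (Fin N))
      rwa [Finset.card_univ, Fintype.card_fin] at h
    have hcore_le : core.card ≤ (Stmt9Aux.Mset f (Finset.univ : Finset (Fin N))).card := by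
      have h1 : (k - 1) * core.card ≤ (k - 1) * (Stmt9Aux.Mset f (Finset.univ : Finset (Fin N))).card := by
        rw [Nat.mul_comm (k-1) core.card]
        calc core.card * (k - 1) ≤ n := hcore_n
          _ ≤ N := by omega
          _ ≤ _ := hMuniv
      exact Nat.le_of_mul_le_mul_left h1 (by omega)
    have hbig : (Fintype.card α - 1) + 3 * (k - 1) * (k - 1) < Fintype.card (Fin N) := by
      rw [Fintype.card_fin, hcard]
      have hlt : 3 * (k - 1) * (k - 1) < 23 * k ^ 2 + 1 := by
        have hj : k - 1 < k := by omega
        calc 3 * (k - 1) * (k - 1) ≤ 3 * k * k := by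
              exact Nat.mul_le_mul (Nat.mul_le_mul_left 3 (by omega)) (by omega)
          _ = 3 * k ^ 2 := by ring
          _ < 23 * k ^ 2 + 1 := by nlinarith
      omega
    -- the processing list
    set lfull : List α := core.toList ++ l with hlfull
    have hlfull_nd : lfull.Nodup := by
      rw [hlfull, List.nodup_append]
      refine ⟨Finset.nodup_toList core, hlnd, ?_⟩
      intro a ha b hb hab; subst hab
      exact hcdisj a (Finset.mem_toList.1 ha) (List.mem_toFinset.2 hb)
    have hcover0 : (∅ : Finset α) ∪ lfull.toFinset = Finset.univ := by
      rw [Finset.empty_union, hlfull, List.toFinset_append, Finset.toList_toFinset]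
      exact hcup
    have hcase : ∀ u l₂, (u :: l₂) <:+ lfull →
        (u ∈ core ∧ ((Finset.univ \ (u :: l₂).toFinset : Finset α) ⊆ core)) ∨
        (u ∉ core ∧ (G.neighborFinset u \ (u :: l₂).toFinset).card ≤ 3) := by
      intro u l₂ hsuffix
      rcases Stmt9Aux.suffix_append_cases core.toList hsuffix with h | ⟨s', hs1, hs2, hs3⟩
      · -- suffix of l : generic
        right
        have hul : u ∈ l := (h.subset) (by simp)
        constructor
        · intro huc
          exact hcdisj u huc (List.mem_toFinset.2 hul)
        · have hld := hldeg u l₂ h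
          refine le_trans (le_of_eq (congrArg Finset.card ?_)) hld
          ext w
          simp only [Finset.mem_sdiff, Finset.mem_inter, Finset.mem_univ, true_and,
            List.mem_toFinset]
      · -- within the core part
        left
        cases s' with
        | nil => exact absurd rfl hs1
        | cons v s'' =>
          have hs3' : u :: l₂ = v :: (s'' ++ l) := by simpa using hs3
          have huv : u = v := by injection hs3'
          have hl₂ : l₂ = s'' ++ l := by injection hs3'
          subst huv
          subst hl₂
          constructor
          · have : u ∈ core.toList := hs2.subset (by simp)
            exact Finset.mem_toList.1 this
          · intro a ha
            obtain ⟨_, ha2⟩ := Finset.mem_sdiff.1 ha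
            have hacup : a ∈ core ∪ l.toFinset := by rw [hcup]; exact Finset.mem_univ a
            rcases Finset.mem_union.1 hacup with h | h
            · exact h
            · exfalso
              apply ha2
              simp only [List.toFinset_cons, Finset.mem_insert, List.toFinset_append,
                Finset.mem_union, List.mem_toFinset]
              right; right
              exact List.mem_toFinset.1 h
    have hN0 : 0 < N := by omega
    obtain ⟨ψ, hψinj, hψadj⟩ :=
      Stmt9Aux.ext_lemma G Fᶜ f hhead hsuf hadj5 hlen core hcore_le hbig lfull ∅
        (fun _ => (⟨0, hN0⟩ : Fin N)) hcover0 (by simp) hlfull_nd hcase (by simp)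
        (by simp) (by simp) (by simp)
    refine ⟨⟨ψ, hψinj⟩, ?_⟩
    intro a b hab
    by_contra hF
    have hne : ψ a ≠ ψ b := fun h => (G.ne_of_adj hab) (hψinj h)
    exact (hψadj a b hab) ((SimpleGraph.compl_adj F (ψ a) (ψ b)).2 ⟨hne, hF⟩)
  · -- long path in the complement
    right
    push_neg at hlen
    obtain ⟨x, hx⟩ := hlen
    exact Stmt9Aux.contains_path_of_chain Fᶜ k (f x) (hchain x) (hnodup x) (by omega)
end

section
/- Let k ≥ 2 be an integer and let G be a connected graph on n vertices with n ≥ α'(G) + k². Then r(G, P_k) ≥ n + k − 2 − α'(G) − γ, where γ = 0 if k−1 divides n+k−3−α'(G) and γ = 1 otherwise. -/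
open SimpleGraph


lemma nat_div_eq_iff {m x j : ℕ} (hm : 0 < m) : x / m = j ↔ m * j ≤ x ∧ x < m * (j + 1) := by
  constructor
  · rintro rfl
    have h1 := Nat.div_add_mod x m
    have h2 := Nat.mod_lt x hm
    have h3 : m * (x / m + 1) = m * (x / m) + m := Nat.mul_succ _ _
    omega
  · rintro ⟨h1, h2⟩
    rw [mul_comm] at h1 h2
    exact Nat.div_eq_of_lt_le h1 h2

lemma card_fin_filter_Ico (N lo hi : ℕ) (hhi : hi ≤ N) :
    ((Finset.univ : Finset (Fin N)).filter (fun x : Fin N => lo ≤ (x : ℕ) ∧ (x : ℕ) < hi)).card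
      = hi - lo := by
  classical
  rw [← Nat.card_Ico lo hi]
  refine Finset.card_bij' (fun x _ => (x : ℕ))
    (fun y hy => (⟨y, by simp only [Finset.mem_Ico] at hy; omega⟩ : Fin N)) ?_ ?_ ?_ ?_
  · intro a ha; simp only [Finset.mem_filter] at ha; simp only [Finset.mem_Ico]; omega
  · intro a ha; simp only [Finset.mem_Ico] at ha; simp only [Finset.mem_filter, Finset.mem_univ,
      true_and]; omega
  · intro a ha; simp
  · intro a ha; simp

/-- the block-index function -/
def blockFn (m x0 x : ℕ) : ℕ :=
  if x < x0 * (m - 1) then x / (m - 1) else x0 + (x - x0 * (m - 1)) / m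

lemma blockCard {N m x0 : ℕ} (hm : 0 < m) (ha : x0 * (m - 1) ≤ N)
    (hdvd : m ∣ (N - x0 * (m - 1))) (x : Fin N) :
    ((Finset.univ : Finset (Fin N)).filter
        (fun y : Fin N => blockFn m x0 (y : ℕ) = blockFn m x0 (x : ℕ))).card
      = if (x : ℕ) < x0 * (m - 1) then m - 1 else m := by
  classical
  obtain ⟨Q, hQ⟩ := hdvd
  by_cases hx : (x : ℕ) < x0 * (m - 1)
  · -- region 1
    have hm1 : 0 < m - 1 := by
      rcases Nat.eq_zero_or_pos (m - 1) with h | h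
      · rw [h, Nat.mul_zero] at hx; omega
      · exact h
    obtain ⟨j, hj⟩ : ∃ j, (x : ℕ) / (m - 1) = j := ⟨_, rfl⟩
    have hcx : blockFn m x0 (x : ℕ) = j := by simp [blockFn, hx, hj]
    have hjx0 : j < x0 := by
      rw [← hj]
      exact (Nat.div_lt_iff_lt_mul hm1).mpr (by have := Nat.mul_comm x0 (m-1); omega)
    have hmulstep : (m - 1) * (j + 1) = (m - 1) * j + (m - 1) := Nat.mul_succ _ _
    have hhi : (m - 1) * (j + 1) ≤ x0 * (m - 1) := by
      rw [mul_comm x0]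
      exact Nat.mul_le_mul_left _ (by omega)
    have hfeq : (Finset.univ.filter
        (fun y : Fin N => blockFn m x0 (y : ℕ) = blockFn m x0 (x : ℕ)))
        = Finset.univ.filter (fun y : Fin N => (m-1)*j ≤ (y : ℕ) ∧ (y : ℕ) < (m-1)*(j+1)) := by
      ext y
      simp only [Finset.mem_filter, Finset.mem_univ, true_and, hcx]
      by_cases hy : (y : ℕ) < x0 * (m - 1)
      · rw [show blockFn m x0 (y : ℕ) = (y : ℕ) / (m - 1) from by simp [blockFn, hy]]
        exact nat_div_eq_iff hm1
      · rw [show blockFn m x0 (y : ℕ) = x0 + ((y : ℕ) - x0 * (m-1)) / m from by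
          simp [blockFn, hy]]
        constructor
        · intro h
          have h' : x0 ≤ j := h ▸ Nat.le_add_right x0 _
          exact absurd hjx0 (not_lt.mpr h')
        · intro h
          exact absurd h.2 (by omega)
    rw [hfeq, card_fin_filter_Ico _ _ _ (by omega), if_pos hx]
    omega
  · -- region 2
    obtain ⟨q, hq⟩ : ∃ q, ((x : ℕ) - x0 * (m - 1)) / m = q := ⟨_, rfl⟩
    have hcx : blockFn m x0 (x : ℕ) = x0 + q := by simp [blockFn, hx, hq]
    have hqQ : q < Q := by
      rw [← hq]
      exact (Nat.div_lt_iff_lt_mul hm).mpr (by have := Nat.mul_comm Q m; omega)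
    have hmulstep : m * (q + 1) = m * q + m := Nat.mul_succ _ _
    have hQstep : m * (q + 1) ≤ m * Q := Nat.mul_le_mul_left _ (by omega)
    have hhi : x0 * (m - 1) + m * (q + 1) ≤ N := by omega
    have hfeq : (Finset.univ.filter
        (fun y : Fin N => blockFn m x0 (y : ℕ) = blockFn m x0 (x : ℕ)))
        = Finset.univ.filter (fun y : Fin N =>
            x0 * (m-1) + m*q ≤ (y : ℕ) ∧ (y : ℕ) < x0 * (m-1) + m*(q+1)) := by
      ext y
      simp only [Finset.mem_filter, Finset.mem_univ, true_and, hcx]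
      by_cases hy : (y : ℕ) < x0 * (m - 1)
      · have hm1 : 0 < m - 1 := by
          rcases Nat.eq_zero_or_pos (m - 1) with h | h
          · rw [h, Nat.mul_zero] at hy; omega
          · exact h
        rw [show blockFn m x0 (y : ℕ) = (y : ℕ) / (m - 1) from by simp [blockFn, hy]]
        have hlt : (y : ℕ) / (m - 1) < x0 := (Nat.div_lt_iff_lt_mul hm1).mpr
          (by have := Nat.mul_comm x0 (m-1); omega)
        constructor
        · intro h; omega
        · intro h; omega
      · rw [show blockFn m x0 (y : ℕ) = x0 + ((y : ℕ) - x0 * (m-1)) / m from by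
          simp [blockFn, hy]]
        rw [show (x0 + ((y : ℕ) - x0*(m-1))/m = x0 + q) ↔ (((y : ℕ) - x0*(m-1))/m = q) from by
          omega, nat_div_eq_iff hm]
        omega
    rw [hfeq, card_fin_filter_Ico _ _ _ hhi, if_neg hx]
    omega


noncomputable def indepNum {α : Type*} (G : SimpleGraph α) : ℕ :=
  sSup {m : ℕ | ∃ s : Finset α, (∀ a ∈ s, ∀ b ∈ s, a ≠ b → ¬ G.Adj a b) ∧ s.card = m}

noncomputable def alphaPrime {α : Type*} [Fintype α] (G : SimpleGraph α) : ℕ :=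
  ⨅ v : α, _root_.indepNum (G.induce {u : α | u ≠ v ∧ ¬ G.Adj v u})

/-- a path on `t` vertices inside `A` (encoded by a ℕ-indexed sequence) -/
def PathOn {V : Type*} (H : SimpleGraph V) (A : Finset V) (t : ℕ) : Prop :=
  ∃ f : ℕ → V, (∀ i < t, f i ∈ A) ∧ (∀ i < t, ∀ j < t, i ≠ j → f i ≠ f j) ∧
    (∀ i, i + 1 < t → H.Adj (f i) (f (i + 1)))

lemma greedy_path {V : Type*} [DecidableEq V] (H : SimpleGraph V) [DecidableRel H.Adj] (A : Finset V)
    (hA : A.Nonempty) (d : ℕ) (hdeg : ∀ v ∈ A, d ≤ (A.filter (H.Adj v)).card) :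
    ∀ t, t ≤ d + 1 → PathOn H A t := by
  intro t
  induction t with
  | zero => exact fun _ => ⟨fun _ => hA.choose, by omega, by omega, by omega⟩
  | succ t ih =>
    intro ht
    obtain ⟨f, h1, h2, h3⟩ := ih (by omega)
    rcases Nat.eq_zero_or_pos t with rfl | htpos
    · exact ⟨fun _ => hA.choose, fun i _ => hA.choose_spec, by omega, by omega⟩
    · have hlast : f (t - 1) ∈ A := h1 _ (by omega)
      have hS : ((A.filter (H.Adj (f (t-1)))) \ ((Finset.range (t-1)).image f)).Nonempty := by
        apply Finset.card_pos.mp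
        have hc1 := Finset.le_card_sdiff ((Finset.range (t-1)).image f) (A.filter (H.Adj (f (t-1))))
        have hc2 : ((Finset.range (t-1)).image f).card ≤ t - 1 := by
          calc _ ≤ (Finset.range (t-1)).card := Finset.card_image_le
          _ = t - 1 := Finset.card_range _
        have hc3 := hdeg _ hlast
        omega
      obtain ⟨w, hw⟩ := hS
      rw [Finset.mem_sdiff, Finset.mem_filter] at hw
      obtain ⟨⟨hwA, hwadj⟩, hwnot⟩ := hw
      refine ⟨Function.update f t w, ?_, ?_, ?_⟩
      · intro i hi
        rcases Nat.lt_or_ge i t with h | h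
        · rw [Function.update_of_ne (by omega)]; exact h1 i h
        · have : i = t := by omega
          rw [this, Function.update_self]; exact hwA
      · intro i hi j hj hij
        rcases Nat.lt_or_ge i t with hi' | hi' <;> rcases Nat.lt_or_ge j t with hj' | hj'
        · rw [Function.update_of_ne (by omega), Function.update_of_ne (by omega)]
          exact h2 i hi' j hj' hij
        · have hjt : j = t := by omega
          rw [hjt, Function.update_self, Function.update_of_ne (by omega)]
          intro hcon
          rcases Nat.lt_or_ge i (t-1) with hi'' | hi''
          · exact hwnot (Finset.mem_image.mpr ⟨i, Finset.mem_range.mpr hi'', hcon⟩)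
          · have : i = t - 1 := by omega
            rw [this] at hcon
            exact H.irrefl (hcon ▸ hwadj)
        · have hit : i = t := by omega
          rw [hit, Function.update_self, Function.update_of_ne (by omega)]
          intro hcon
          rcases Nat.lt_or_ge j (t-1) with hj'' | hj'' 
          · exact hwnot (Finset.mem_image.mpr ⟨j, Finset.mem_range.mpr hj'', hcon.symm⟩)
          · have : j = t - 1 := by omega
            rw [this] at hcon
            exact H.irrefl (hcon ▸ hwadj)
        · omega
      · intro i hi
        rcases Nat.lt_or_ge (i+1) t with h | h
        · rw [Function.update_of_ne (by omega), Function.update_of_ne (by omega)]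
          exact h3 i h
        · have hit : i = t - 1 := by omega
          have : i + 1 = t := by omega
          rw [this, Function.update_self, Function.update_of_ne (by omega), hit]
          exact hwadj

lemma pathOn_mono {V : Type*} (H : SimpleGraph V) {A B : Finset V} (hAB : A ⊆ B) (t : ℕ) :
    PathOn H A t → PathOn H B t := by
  rintro ⟨f, h1, h2, h3⟩
  exact ⟨f, fun i hi => hAB (h1 i hi), h2, h3⟩

lemma indep_of_pathfree {V : Type*} [DecidableEq V] (H : SimpleGraph V) [DecidableRel H.Adj]
    (k : ℕ) (hk : 2 ≤ k) (A : Finset V) (hfree : ¬ PathOn H A k) :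
    ∃ s : Finset V, s ⊆ A ∧ (∀ a ∈ s, ∀ b ∈ s, a ≠ b → ¬ H.Adj a b) ∧
      A.card ≤ s.card * (k - 1) := by
  induction A using Finset.strongInductionOn with
  | _ A ih =>
  rcases Finset.eq_empty_or_nonempty A with rfl | hA
  · exact ⟨∅, Finset.Subset.refl _, by simp, by simp⟩
  · have hv : ∃ v ∈ A, (A.filter (H.Adj v)).card ≤ k - 2 := by
      by_contra hcon
      push_neg at hcon
      exact hfree (greedy_path H A hA (k-1) (fun v hv => by have := hcon v hv; omega) k (by omega))
    obtain ⟨v, hvA, hvdeg⟩ := hv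
    set D : Finset V := insert v (A.filter (H.Adj v)) with hD
    have hDA : D ⊆ A := Finset.insert_subset hvA (Finset.filter_subset _ _)
    have hsub : A \ D ⊂ A := Finset.sdiff_ssubset hDA ⟨v, Finset.mem_insert_self _ _⟩
    have hfree' : ¬ PathOn H (A \ D) k :=
      fun hp => hfree (pathOn_mono H (Finset.sdiff_subset) k hp)
    obtain ⟨s', hs'sub, hs'ind, hs'card⟩ := ih (A \ D) hsub hfree'
    have hvns : v ∉ s' := fun h => (Finset.mem_sdiff.mp (hs'sub h)).2 (Finset.mem_insert_self _ _)
    refine ⟨insert v s', ?_, ?_, ?_⟩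
    · exact Finset.insert_subset hvA (hs'sub.trans Finset.sdiff_subset)
    · intro a ha b hb hab
      rcases Finset.mem_insert.mp ha with rfl | ha' <;>
        rcases Finset.mem_insert.mp hb with rfl | hb'
      · exact absurd rfl hab
      · intro hadj
        have hbA : b ∈ A := (Finset.mem_sdiff.mp (hs'sub hb')).1
        have : b ∈ D := Finset.mem_insert_of_mem (Finset.mem_filter.mpr ⟨hbA, hadj⟩)
        exact (Finset.mem_sdiff.mp (hs'sub hb')).2 this
      · intro hadj
        have haA : a ∈ A := (Finset.mem_sdiff.mp (hs'sub ha')).1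
        have : a ∈ D := Finset.mem_insert_of_mem (Finset.mem_filter.mpr ⟨haA, hadj.symm⟩)
        exact (Finset.mem_sdiff.mp (hs'sub ha')).2 this
      · exact hs'ind a ha' b hb' hab
    · have hDcard : D.card ≤ k - 1 := by
        calc D.card ≤ (A.filter (H.Adj v)).card + 1 := Finset.card_insert_le _ _
        _ ≤ k - 1 := by omega
      have h1 : A.card ≤ (A \ D).card + D.card := Finset.card_le_card_sdiff_add_card
      have h2 : (insert v s').card = s'.card + 1 := Finset.card_insert_of_notMem hvns
      have h3 : (s'.card + 1) * (k-1) = s'.card * (k-1) + (k-1) := Nat.succ_mul _ _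
      rw [h2]
      omega

lemma pathOn_contains {V : Type*} [Fintype V] (H : SimpleGraph V) (k : ℕ)
    (h : PathOn H (Finset.univ : Finset V) k) : Contains H (pathGraph k) := by
  obtain ⟨f, _, h2, h3⟩ := h
  refine ⟨⟨fun i : Fin k => f i, fun i j hij => ?_⟩, fun a b hab => ?_⟩
  · by_contra hne
    exact h2 i i.isLt j j.isLt (fun h => hne (Fin.ext h)) hij
  · rw [SimpleGraph.pathGraph_adj] at hab
    rcases hab with h | h
    · have := h3 a (by omega)
      show H.Adj (f a) (f b)
      simpa [show (a : ℕ) + 1 = (b : ℕ) from h] using this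
    · have := h3 b (by omega)
      have h' := this.symm
      show H.Adj (f a) (f b)
      simpa [show (b : ℕ) + 1 = (a : ℕ) from h] using h'

lemma le_indepNum {β : Type*} [Finite β] (G : SimpleGraph β) (s : Finset β)
    (hs : ∀ a ∈ s, ∀ b ∈ s, a ≠ b → ¬ G.Adj a b) : s.card ≤ _root_.indepNum G := by
  have := Fintype.ofFinite β
  apply le_csSup
  · refine ⟨Fintype.card β, ?_⟩
    rintro m ⟨t, _, rfl⟩
    exact Finset.card_le_univ t
  · exact ⟨s, hs, rfl⟩

lemma ramsey_mono {α β : Type*} {H₁ : SimpleGraph α} {H₂ : SimpleGraph β} {N M : ℕ}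
    (hNM : N ≤ M) (h : RamseyProp N H₁ H₂) : RamseyProp M H₁ H₂ := by
  intro F
  set e : Fin N ↪ Fin M := Fin.castLEEmb hNM with he
  rcases h (F.comap e) with ⟨g, hg⟩ | ⟨g, hg⟩
  · exact Or.inl ⟨g.trans e, fun a b hab => hg a b hab⟩
  · refine Or.inr ⟨g.trans e, fun a b hab => ?_⟩
    have h' := hg a b hab
    simp only [SimpleGraph.compl_adj, SimpleGraph.comap_adj] at h' ⊢
    exact ⟨fun hc => h'.1 (e.injective hc), h'.2⟩

lemma ramsey_upper {α : Type*} [Fintype α] (G : SimpleGraph α) (k : ℕ) (hk : 2 ≤ k) :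
    RamseyProp (Fintype.card α * (k - 1) + 1) G (pathGraph k) := by
  classical
  set N := Fintype.card α * (k - 1) + 1 with hN
  intro F
  by_cases hC : Contains Fᶜ (pathGraph k)
  · exact Or.inr hC
  · left
    have hfree : ¬ PathOn Fᶜ (Finset.univ : Finset (Fin N)) k :=
      fun hp => hC (pathOn_contains _ _ hp)
    obtain ⟨s, _, hsind, hscard⟩ := indep_of_pathfree Fᶜ k hk Finset.univ hfree
    have hcard : Fintype.card α ≤ s.card := by
      by_contra hcon
      push_neg at hcon
      have : s.card * (k-1) ≤ (Fintype.card α) * (k-1) := Nat.mul_le_mul_right _ (by omega)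
      have hNs := Finset.card_univ (α := Fin N) ▸ hscard
      simp only [Fintype.card_fin] at hNs
      omega
    obtain ⟨t, hts, htcard⟩ := Finset.exists_subset_card_eq hcard
    have : Fintype.card α = Fintype.card {x // x ∈ t} := by
      rw [Fintype.card_coe, htcard]
    set e := Fintype.equivOfCardEq this with he
    refine ⟨⟨fun a => (e a : Fin N), fun a b hab => e.injective (Subtype.val_injective hab)⟩,
      fun a b hab => ?_⟩
    have hne : (e a : Fin N) ≠ (e b : Fin N) := by
      intro hcon
      exact G.ne_of_adj hab (e.injective (Subtype.val_injective hcon))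
    have h1 : (e a : Fin N) ∈ s := hts (e a).2
    have h2 : (e b : Fin N) ∈ s := hts (e b).2
    have := hsind _ h1 _ h2 hne
    simp only [SimpleGraph.compl_adj, not_and, not_not] at this
    exact this hne



lemma no_ramseyProp {α : Type*} [Fintype α] [Nonempty α] (G : SimpleGraph α)
    (k N m x0 : ℕ) (hk : 2 ≤ k) (hm : m = k - 1)
    (ha : x0 * (m - 1) ≤ N) (hdvd : m ∣ (N - x0 * (m - 1)))
    (hnum : ∀ bl : ℕ, m - 1 ≤ bl → (x0 = 0 → m ≤ bl) → bl ≤ m →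
      alphaPrime G + 1 + N < Fintype.card α + bl) :
    ¬ RamseyProp N G (pathGraph k) := by
  classical
  have hm0 : 0 < m := by omega
  intro hR
  set c : Fin N → ℕ := fun x => blockFn m x0 (x : ℕ) with hc
  set F : SimpleGraph (Fin N) := SimpleGraph.fromRel (fun x y => c x ≠ c y) with hF
  have hFadj : ∀ x y : Fin N, F.Adj x y ↔ c x ≠ c y := by
    intro x y
    rw [hF, SimpleGraph.fromRel_adj]
    constructor
    · rintro ⟨hne, h | h⟩
      · exact h
      · exact h.symm
    · intro h
      exact ⟨fun hxy => h (by rw [hxy]), Or.inl h⟩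
  have hblock : ∀ x : Fin N,
      m - 1 ≤ ((Finset.univ : Finset (Fin N)).filter (fun y => c y = c x)).card ∧
      (x0 = 0 → m ≤ ((Finset.univ : Finset (Fin N)).filter (fun y => c y = c x)).card) ∧
      ((Finset.univ : Finset (Fin N)).filter (fun y => c y = c x)).card ≤ m := by
    intro x
    have := blockCard hm0 ha hdvd x
    rw [show ((Finset.univ : Finset (Fin N)).filter (fun y => c y = c x))
      = ((Finset.univ : Finset (Fin N)).filter
          (fun y : Fin N => blockFn m x0 (y : ℕ) = blockFn m x0 (x : ℕ))) from rfl, this]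
    refine ⟨by split <;> omega, ?_, by split <;> omega⟩
    intro h0
    rw [if_neg (by rw [h0]; simp)]
  rcases hR F with ⟨f, hf⟩ | ⟨f, hf⟩
  · -- F contains G : contradiction
    have hadj : ∀ a b : α, G.Adj a b → c (f a) ≠ c (f b) :=
      fun a b hab => (hFadj _ _).mp (hf a b hab)
    obtain ⟨v, hv⟩ := exists_eq_ciInf_of_finite
      (f := fun v : α => _root_.indepNum (G.induce {u : α | u ≠ v ∧ ¬ G.Adj v u}))
    have hvAlpha : _root_.indepNum (G.induce {u : α | u ≠ v ∧ ¬ G.Adj v u}) = alphaPrime G := hv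
    set B : Finset α := Finset.univ.filter (fun a => c (f a) = c (f v)) with hB
    have hvB : v ∈ B := by simp [hB]
    -- B.card ≤ alphaPrime G + 1
    set P : Set α := {u : α | u ≠ v ∧ ¬ G.Adj v u} with hP
    set t : Finset ↥P := Finset.univ.filter (fun u : ↥P => (u : α) ∈ B) with ht
    have hBP : ∀ u ∈ B.erase v, u ∈ P := by
      intro u hu
      obtain ⟨hune, huB⟩ := Finset.mem_erase.mp hu
      refine ⟨hune, fun hadj' => ?_⟩
      have h1 := hadj v u hadj'
      have h2 : c (f u) = c (f v) := by
        have := Finset.mem_filter.mp huB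
        exact this.2
      exact h1 h2.symm
    have herase : B.erase v ⊆ t.image (Subtype.val) := by
      intro u hu
      refine Finset.mem_image.mpr ⟨⟨u, hBP u hu⟩, ?_, rfl⟩
      simp [ht, (Finset.mem_erase.mp hu).2]
    have htcard : (B.erase v).card ≤ t.card := by
      calc (B.erase v).card ≤ (t.image Subtype.val).card := Finset.card_le_card herase
      _ = t.card := Finset.card_image_of_injective _ Subtype.val_injective
    have htind : ∀ u ∈ t, ∀ w ∈ t, u ≠ w → ¬ (G.induce P).Adj u w := by
      intro u hu w hw huw hadj'
      have hGuw : G.Adj (u : α) (w : α) := hadj'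
      have h1 := hadj _ _ hGuw
      have h2 : c (f (u : α)) = c (f v) := (Finset.mem_filter.mp ((Finset.mem_filter.mp hu).2)).2
      have h3 : c (f (w : α)) = c (f v) := (Finset.mem_filter.mp ((Finset.mem_filter.mp hw).2)).2
      exact h1 (h2.trans h3.symm)
    have htle : t.card ≤ alphaPrime G := by
      rw [← hvAlpha]
      exact le_indepNum _ t htind
    have hBcard : B.card ≤ alphaPrime G + 2 - 1 := by
      have := Finset.card_erase_of_mem hvB
      omega
    -- counting
    obtain ⟨hbl1, hbl2, hbl3⟩ := hblock (f v)
    have himg : (Finset.univ.filter (fun a : α => ¬ (c (f a) = c (f v)))).card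
        ≤ N - ((Finset.univ : Finset (Fin N)).filter (fun y => c y = c (f v))).card := by
      have hsub : (Finset.univ.filter (fun a : α => ¬ (c (f a) = c (f v)))).image f
          ⊆ (Finset.univ : Finset (Fin N)).filter (fun y => ¬ (c y = c (f v))) := by
        intro y hy
        obtain ⟨a, ha', rfl⟩ := Finset.mem_image.mp hy
        simp only [Finset.mem_filter, Finset.mem_univ, true_and] at ha' ⊢
        exact ha'
      have h1 : (Finset.univ.filter (fun a : α => ¬ (c (f a) = c (f v)))).card
          = ((Finset.univ.filter (fun a : α => ¬ (c (f a) = c (f v)))).image f).card :=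
        (Finset.card_image_of_injective _ f.injective).symm
      have h2 := Finset.card_le_card hsub
      have h3 := Finset.card_filter_add_card_filter_not
        (s := (Finset.univ : Finset (Fin N))) (fun y => c y = c (f v))
      simp only [Finset.card_univ, Fintype.card_fin] at h3
      omega
    have hsplit := Finset.card_filter_add_card_filter_not
      (s := (Finset.univ : Finset α)) (fun a => c (f a) = c (f v))
    simp only [Finset.card_univ] at hsplit
    have hBn : (Finset.univ.filter (fun a : α => c (f a) = c (f v))).card = B.card := rfl
    have hiN : ((Finset.univ : Finset (Fin N)).filter (fun y => c y = c (f v))).card ≤ N := by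
      calc _ ≤ (Finset.univ : Finset (Fin N)).card := Finset.card_filter_le _ _
      _ = N := by simp
    have := hnum _ hbl1 hbl2 hbl3
    omega
  · -- Fᶜ contains path : contradiction
    have hadj : ∀ x y : Fin N, Fᶜ.Adj x y → c x = c y := by
      intro x y hxy
      rw [SimpleGraph.compl_adj] at hxy
      by_contra hne
      exact hxy.2 ((hFadj _ _).mpr hne)
    have hk0 : 0 < k := by omega
    have hchain : ∀ i : ℕ, ∀ hi : i < k, c (f ⟨i, hi⟩) = c (f ⟨0, hk0⟩) := by
      intro i
      induction i with
      | zero => intro hi; rfl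
      | succ i ih =>
        intro hi
        have hprev := ih (by omega)
        have hadj' : (pathGraph k).Adj ⟨i, by omega⟩ ⟨i+1, hi⟩ := by
          rw [SimpleGraph.pathGraph_adj]; left; rfl
        have := hadj _ _ (hf _ _ hadj')
        rw [← this]; exact hprev
    have himg : (Finset.univ.image (fun i : Fin k => f i))
        ⊆ (Finset.univ : Finset (Fin N)).filter (fun y => c y = c (f ⟨0, hk0⟩)) := by
      intro y hy
      obtain ⟨i, _, rfl⟩ := Finset.mem_image.mp hy
      simp only [Finset.mem_filter, Finset.mem_univ, true_and]
      have := hchain i i.isLt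
      simpa using this
    have hcardk : (Finset.univ.image (fun i : Fin k => f i)).card = k := by
      rw [Finset.card_image_of_injective _ f.injective, Finset.card_univ, Fintype.card_fin]
    obtain ⟨_, _, hbl3⟩ := hblock (f ⟨0, hk0⟩)
    have := Finset.card_le_card himg
    omega


theorem stmt12 {α : Type*} [Fintype α] (k n : ℕ) (hk : 2 ≤ k)
    (G : SimpleGraph α) (hcard : Fintype.card α = n) (hconn : G.Connected)
    (hn : alphaPrime G + k ^ 2 ≤ n)
    (γ : ℕ) (hγ : γ = if (k - 1) ∣ (n + k - 3 - alphaPrime G) then 0 else 1) :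
    (n : ℤ) + k - 2 - alphaPrime G - γ ≤ (ramseyNumber G (pathGraph k) : ℤ) := by
  classical
  haveI : Nonempty α := hconn.nonempty
  set ap := alphaPrime G with hap
  have hkk : k ^ 2 = k * k := by ring
  have hn4 : ap + 4 ≤ n := by
    have h4 : 2 * 2 ≤ k * k := Nat.mul_le_mul hk hk
    omega
  have hγ1 : γ ≤ 1 := by rw [hγ]; split <;> omega
  set m := k - 1 with hm
  have hm0 : 0 < m := by omega
  set N₀ := n + k - 3 - ap - γ with hN₀def
  have hexp : (k - 1) * (k - 1) + 2 * k = k * k + 1 := by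
    obtain ⟨j, rfl⟩ : ∃ j, k = j + 2 := ⟨k - 2, by omega⟩
    simp only [show j + 2 - 1 = j + 1 from rfl]
    ring
  have hNbig : m * m ≤ N₀ := by
    rw [hm]
    omega
  set x0 := (m - N₀ % m) % m with hx0def
  have hx0m : x0 < m := Nat.mod_lt _ hm0
  have hmle : x0 * (m - 1) ≤ m * m := Nat.mul_le_mul (by omega) (by omega)
  have ha : x0 * (m - 1) ≤ N₀ := le_trans hmle hNbig
  -- divisibility
  have hQdef := Nat.div_add_mod N₀ m
  set Qq := N₀ / m with hQq
  set r := N₀ % m with hr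
  have hrm : r < m := Nat.mod_lt _ hm0
  have hdvd : m ∣ (N₀ - x0 * (m - 1)) := by
    rcases Nat.eq_zero_or_pos r with hr0 | hrpos
    · have hx00 : x0 = 0 := by rw [hx0def, hr0, Nat.sub_zero, Nat.mod_self]
      rw [hx00, Nat.zero_mul, Nat.sub_zero]
      exact ⟨Qq, by omega⟩
    · have hx0eq : x0 = m - r := by rw [hx0def]; exact Nat.mod_eq_of_lt (by omega)
      have hQqm : m ≤ Qq := by
        rw [hQq]
        rw [Nat.le_div_iff_mul_le hm0]
        exact hNbig
      refine ⟨Qq + r + 1 - m, ?_⟩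
      have hle1 : x0 * (m - 1) ≤ N₀ := ha
      have hNQ' : (m : ℤ) * Qq + r = N₀ := by exact_mod_cast hQdef
      have hcast : ((N₀ - x0 * (m - 1) : ℕ) : ℤ) = (N₀ : ℤ) - (x0 : ℤ) * ((m : ℤ) - 1) := by
        push_cast [hle1, Nat.cast_sub (show 1 ≤ m from hm0)]
        ring
      have hgoal : ((N₀ - x0 * (m - 1) : ℕ) : ℤ) = (m : ℤ) * ((Qq + r + 1 - m : ℕ) : ℤ) := by
        rw [hcast]
        have hx0cast : (x0 : ℤ) = (m : ℤ) - r := by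
          rw [hx0eq]; push_cast [le_of_lt hrm]; ring
        have hwcast : ((Qq + r + 1 - m : ℕ) : ℤ) = (Qq : ℤ) + r + 1 - m := by
          push_cast [show m ≤ Qq + r + 1 from by omega]; ring
        rw [hx0cast, hwcast]
        linear_combination -1 * hNQ'
      exact_mod_cast hgoal
  have hk3 : γ = 1 → 3 ≤ k := by
    intro h1
    by_contra h2
    have hk2' : k - 1 = 1 := by omega
    have : (k - 1) ∣ (n + k - 3 - ap) := by rw [hk2']; exact one_dvd _
    rw [hγ, if_pos this] at h1
    omega
  have hγ0 : γ = 0 → x0 = 0 := by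
    intro h0
    have hdv : (k - 1) ∣ (n + k - 3 - ap) := by
      by_contra hdv
      rw [hγ, if_neg hdv] at h0
      omega
    have hN0dv : m ∣ N₀ := by
      rw [hN₀def, h0, Nat.sub_zero, hm]
      exact hdv
    have hreq : r = 0 := by
      rw [hr]
      obtain ⟨cq, hcq⟩ := hN0dv
      rw [hcq]
      exact Nat.mul_mod_right m cq
    rw [hx0def, hreq, Nat.sub_zero, Nat.mod_self]
  have hnum : ∀ bl : ℕ, m - 1 ≤ bl → (x0 = 0 → m ≤ bl) → bl ≤ m →
      ap + 1 + N₀ < Fintype.card α + bl := by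
    intro bl h1 h2 h3
    rw [hcard]
    by_cases hx00 : x0 = 0
    · have hblm := h2 hx00
      omega
    · have hγne : γ ≠ 0 := fun h => hx00 (hγ0 h)
      have hγeq : γ = 1 := by omega
      have hk3' := hk3 hγeq
      omega
  have hnotram : ¬ RamseyProp N₀ G (pathGraph k) :=
    no_ramseyProp G k N₀ m x0 hk hm ha hdvd hnum
  have hupper : RamseyProp (n * (k - 1) + 1) G (pathGraph k) := by
    have := ramsey_upper G k hk
    rw [hcard] at this
    exact this
  set S : Set ℕ := {N : ℕ | 0 < N ∧ RamseyProp N G (pathGraph k)} with hS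
  have hSne : S.Nonempty := ⟨n * (k - 1) + 1, by omega, hupper⟩
  have hmem := Nat.sInf_mem hSne
  have hgt : N₀ < sInf S := by
    by_contra hcon
    push_neg at hcon
    exact hnotram (ramsey_mono hcon hmem.2)
  have hram : ramseyNumber G (pathGraph k) = sInf S := rfl
  rw [hram]
  omega
end
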